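/- arXiv:2404.09279 — 8 statements merged into one kernel-verified Lean document; each statement's English description precedes it below -/
import Mathlib

section
/- If (0,0) ∉ Q, then the optimal derivative function μ is strictly decreasing on [0,1]. -/
open Matrix Complex

/-- `Jf V U i j = ∑ₖ |(U* Vₖ U)ᵢⱼ|²`. -/
noncomputable def Jf {r : ℕ} (V : Fin r → Matrix (Fin 2) (Fin 2) ℂ)
    (U : Matrix (Fin 2) (Fin 2) ℂ) (i j : Fin 2) : ℝ :=
  ∑ k, ‖(Uᴴ * V k * U) i j‖ ^ 2

/-- The space of generators `Q`. -/
noncomputable def Qset {r : ℕ} (V : Fin r → Matrix (Fin 2) (Fin 2) ℂ) : Set (ℝ × ℝ) :=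
  {p | ∃ U ∈ Matrix.specialUnitaryGroup (Fin 2) ℂ,
    p = (Jf V U 0 1 - Jf V U 1 0, Jf V U 0 1 + Jf V U 1 0)}

/-- `lam` is stabilizable if some unitary makes the induced derivative vanish. -/
def Stabilizable {r : ℕ} (V : Fin r → Matrix (Fin 2) (Fin 2) ℂ) (lam : ℝ) : Prop :=
  ∃ U ∈ Matrix.specialUnitaryGroup (Fin 2) ℂ,
    Jf V U 0 1 - lam * (Jf V U 0 1 + Jf V U 1 0) = 0

/-- The maximiser at the larger parameter does strictly better at the smaller one. -/
theorem strictAntiOn_of_isGreatest_sub_mul {α : Type*} {S : Set α} {f g : α → ℝ}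
    (hg : ∀ x ∈ S, 0 < g x) {μ : ℝ → ℝ} {I : Set ℝ}
    (hμ : ∀ t ∈ I, IsGreatest {y | ∃ x ∈ S, y = f x - t * g x} (μ t)) :
    StrictAntiOn μ I := by
  intro a ha b hb hab
  obtain ⟨⟨x, hx, hμb⟩, -⟩ := hμ b hb
  have hμa : f x - a * g x ≤ μ a := (hμ a ha).2 ⟨x, hx, rfl⟩
  have hslope : a * g x < b * g x := mul_lt_mul_of_pos_right hab (hg x hx)
  linarith

theorem Jf_nonneg {r : ℕ} (V : Fin r → Matrix (Fin 2) (Fin 2) ℂ)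
    (U : Matrix (Fin 2) (Fin 2) ℂ) (i j : Fin 2) : 0 ≤ Jf V U i j :=
  Finset.sum_nonneg fun _ _ => sq_nonneg _

theorem Jf_add_pos_of_zero_notMem_Qset {r : ℕ} {V : Fin r → Matrix (Fin 2) (Fin 2) ℂ}
    (hQ : ((0:ℝ), (0:ℝ)) ∉ Qset V) {U : Matrix (Fin 2) (Fin 2) ℂ}
    (hU : U ∈ Matrix.specialUnitaryGroup (Fin 2) ℂ) :
    0 < Jf V U 0 1 + Jf V U 1 0 := by
  have h01 := Jf_nonneg V U 0 1
  have h10 := Jf_nonneg V U 1 0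
  refine lt_of_le_of_ne (by positivity) fun hzero => hQ ⟨U, hU, ?_⟩
  have h01' : Jf V U 0 1 = 0 := by linarith
  have h10' : Jf V U 1 0 = 0 := by linarith
  simp [h01', h10']

theorem stmt_2 {r : ℕ} (V : Fin r → Matrix (Fin 2) (Fin 2) ℂ)
    (μ : ℝ → ℝ)
    (hμ : ∀ lam ∈ Set.Icc (0:ℝ) 1,
      IsGreatest {y : ℝ | ∃ U ∈ Matrix.specialUnitaryGroup (Fin 2) ℂ,
        y = Jf V U 0 1 - lam * (Jf V U 0 1 + Jf V U 1 0)} (μ lam))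
    (hQ : ((0:ℝ), (0:ℝ)) ∉ Qset V) :
    StrictAntiOn μ (Set.Icc (0:ℝ) 1) :=
  strictAntiOn_of_isGreatest_sub_mul (fun _ hU => Jf_add_pos_of_zero_notMem_Qset hQ hU) hμ
end

section
/- If V is not normal (i.e. V V* ≠ V* V), then the set of stabilizable points λ ∈ [0,1] has maximum 1/(1+γ). If V is normal, then every λ ∈ [0,1] is stabilizable. -/
/-!
Both `Jᵢⱼ(U)` depend only on the off-diagonal entries `x = |T₀₁|²`, `y = |T₁₀|²` of
`T = U* V U`: `J₁₂ = x + γ y` and `J₂₁ = y + γ x`, so `λ` is stabilizable by `U` iff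
`x + γ y = λ (1 + γ) (x + y)`. A Schur triangularization (`T₁₀ = 0`, obtained from a unit
eigenvector of `V`) realizes `λ = 1/(1+γ)`. If `V` is normal, so is the triangular `T`,
which is then diagonal, and every `λ` works. If `V` is not normal, no `T` is diagonal, so
`x + y > 0` and `γ ≤ 1` gives `λ (1 + γ) (x + y) ≤ x + y`.
-/

open Matrix Complex

theorem isStarNormal_star_mul_mul_iff {R : Type*} [Semiring R] [StarMul R] {u : R}
    (hu : u ∈ unitary R) {x : R} : IsStarNormal (star u * x * u) ↔ IsStarNormal x := by
  refine ⟨fun _ => ?_, fun _ => ?_⟩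
  · have := IsStarNormal.map (Unitary.conjStarAlgAut ℕ R ⟨u, hu⟩) (star u * x * u)
    simpa [← mul_assoc, mul_assoc x, Unitary.mul_star_self_of_mem hu] using this
  · simpa using IsStarNormal.map (Unitary.conjStarAlgAut ℕ R (star ⟨u, hu⟩)) x

namespace Matrix

theorem isStarNormal_iff_apply_zero_one_eq_zero {𝕜 : Type*} [RCLike 𝕜]
    {M : Matrix (Fin 2) (Fin 2) 𝕜} (hM : M 1 0 = 0) : IsStarNormal M ↔ M 0 1 = 0 := by
  rw [isStarNormal_iff, commute_iff_eq]
  constructor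
  · intro h
    have h00 := congrFun (congrFun h 0) 0
    simp only [mul_apply, Fin.sum_univ_two, star_apply, hM, RCLike.star_def, map_zero,
      mul_zero, add_zero] at h00
    have : M 0 1 * (starRingEnd 𝕜) (M 0 1) = 0 := by linear_combination -h00
    simpa using this
  · intro h
    ext i j
    fin_cases i <;> fin_cases j <;> simp [mul_apply, Fin.sum_univ_two, hM, h, mul_comm]

theorem mem_specialUnitaryGroup_fin_two {R : Type*} [CommRing R] [StarRing R] {a b : R}
    (hab : star a * a + star b * b = 1) :
    !![a, -star b; b, star a] ∈ specialUnitaryGroup (Fin 2) R := by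
  refine mem_specialUnitaryGroup_iff.mpr ⟨mem_unitaryGroup_iff'.mpr ?_, ?_⟩
  · ext i j
    fin_cases i <;> fin_cases j <;>
      simp [mul_apply, Fin.sum_univ_two, star_eq_conjTranspose] <;>
      first | linear_combination hab | ring
  · simp [det_fin_two]
    linear_combination hab

theorem exists_eigenvector_star_dotProduct_self_eq_one {n : Type*} [Fintype n]
    [DecidableEq n] [Nonempty n] (V : Matrix n n ℂ) :
    ∃ (μ : ℂ) (v : n → ℂ), star v ⬝ᵥ v = 1 ∧ V *ᵥ v = μ • v := by
  obtain ⟨μ, hμ⟩ := Module.End.exists_eigenvalue (toEuclideanLin V)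
  obtain ⟨w, hw⟩ := hμ.exists_hasEigenvector
  set v := (‖w‖⁻¹ : ℂ) • w
  have hv : ‖v‖ = 1 := norm_smul_inv_norm hw.2
  have hev : toEuclideanLin V v = μ • v := by
    rw [map_smul, hw.apply_eq_smul, smul_comm]
  refine ⟨μ, v.ofLp, ?_, by simpa using congrArg WithLp.ofLp hev⟩
  have := inner_self_eq_norm_sq_to_K (𝕜 := ℂ) v
  rw [hv, EuclideanSpace.inner_eq_star_dotProduct] at this
  simpa [dotProduct_comm] using this

theorem exists_mem_specialUnitaryGroup_conj_apply_one_zero (V : Matrix (Fin 2) (Fin 2) ℂ) :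
    ∃ U ∈ specialUnitaryGroup (Fin 2) ℂ, (Uᴴ * V * U) 1 0 = 0 := by
  obtain ⟨μ, v, hv, hev⟩ := exists_eigenvector_star_dotProduct_self_eq_one V
  refine ⟨!![v 0, -star (v 1); v 1, star (v 0)],
    mem_specialUnitaryGroup_fin_two (by simpa [dotProduct, Fin.sum_univ_two] using hv), ?_⟩
  have h0 := congrFun hev 0
  have h1 := congrFun hev 1
  simp only [mulVec, dotProduct, Fin.sum_univ_two, Pi.smul_apply, smul_eq_mul] at h0 h1
  simp [mul_apply, Fin.sum_univ_two]
  linear_combination v 0 * h1 - v 1 * h0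

end Matrix

section

variable {V : Matrix (Fin 2) (Fin 2) ℂ} {γ : ℝ} {W : Fin 2 → Matrix (Fin 2) (Fin 2) ℂ}

theorem Jf_eq_of_eq_sqrt_smul_conjTranspose (hγ : 0 ≤ γ) (hW0 : W 0 = V)
    (hW1 : W 1 = (Real.sqrt γ : ℂ) • Vᴴ) (U : Matrix (Fin 2) (Fin 2) ℂ) (i j : Fin 2) :
    Jf W U i j = ‖(Uᴴ * V * U) i j‖ ^ 2 + γ * ‖(Uᴴ * V * U) j i‖ ^ 2 := by
  have hW1U : Uᴴ * W 1 * U = (Real.sqrt γ : ℂ) • (Uᴴ * V * U)ᴴ := by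
    simp [hW1, conjTranspose_mul, Matrix.mul_assoc]
  rw [Jf, Fin.sum_univ_two, hW0, hW1U, Matrix.smul_apply, conjTranspose_apply, smul_eq_mul,
    norm_mul, mul_pow, norm_star, Complex.norm_real, Real.norm_of_nonneg (Real.sqrt_nonneg γ),
    Real.sq_sqrt hγ]

theorem stabilizable_one_div_one_add (hγ : 0 ≤ γ) (hW0 : W 0 = V)
    (hW1 : W 1 = (Real.sqrt γ : ℂ) • Vᴴ) : Stabilizable W (1 / (1 + γ)) := by
  obtain ⟨U, hU, hT⟩ := exists_mem_specialUnitaryGroup_conj_apply_one_zero V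
  refine ⟨U, hU, ?_⟩
  simp only [Jf_eq_of_eq_sqrt_smul_conjTranspose hγ hW0 hW1, hT, norm_zero]
  field_simp
  ring

theorem stabilizable_of_isStarNormal (hγ : 0 ≤ γ) (hW0 : W 0 = V)
    (hW1 : W 1 = (Real.sqrt γ : ℂ) • Vᴴ) (hV : IsStarNormal V) (lam : ℝ) :
    Stabilizable W lam := by
  obtain ⟨U, hU, hT10⟩ := exists_mem_specialUnitaryGroup_conj_apply_one_zero V
  have hT01 : (Uᴴ * V * U) 0 1 = 0 :=
    (isStarNormal_iff_apply_zero_one_eq_zero hT10).1 ((isStarNormal_star_mul_mul_iff hU.1).2 hV)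
  refine ⟨U, hU, ?_⟩
  simp [Jf_eq_of_eq_sqrt_smul_conjTranspose hγ hW0 hW1, hT10, hT01]

theorem le_one_div_one_add_of_stabilizable (hγ : γ ∈ Set.Icc (0 : ℝ) 1) (hW0 : W 0 = V)
    (hW1 : W 1 = (Real.sqrt γ : ℂ) • Vᴴ) (hV : ¬ IsStarNormal V) {lam : ℝ}
    (h : Stabilizable W lam) : lam ≤ 1 / (1 + γ) := by
  obtain ⟨U, hU, h⟩ := h
  simp only [Jf_eq_of_eq_sqrt_smul_conjTranspose hγ.1 hW0 hW1] at h
  set T := Uᴴ * V * U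
  have hT : 0 < ‖T 0 1‖ ^ 2 + ‖T 1 0‖ ^ 2 := by
    refine lt_of_le_of_ne (by positivity) fun hzero => hV ?_
    obtain ⟨h01, h10⟩ := (add_eq_zero_iff_of_nonneg (sq_nonneg _) (sq_nonneg _)).1 hzero.symm
    rw [sq_eq_zero_iff, norm_eq_zero] at h01 h10
    exact (isStarNormal_star_mul_mul_iff hU.1).1
      ((isStarNormal_iff_apply_zero_one_eq_zero h10).2 h01)
  rw [le_div_iff₀ (by linarith [hγ.1])]
  nlinarith [mul_nonneg (sub_nonneg.2 hγ.2) (sq_nonneg ‖T 1 0‖)]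

end

theorem stmt_6 (V : Matrix (Fin 2) (Fin 2) ℂ) (γ : ℝ) (hγ : γ ∈ Set.Icc (0:ℝ) 1)
    (W : Fin 2 → Matrix (Fin 2) (Fin 2) ℂ)
    (hW0 : W 0 = V) (hW1 : W 1 = (Real.sqrt γ : ℂ) • Vᴴ) :
    (¬ (V * Vᴴ = Vᴴ * V) →
      IsGreatest {lam ∈ Set.Icc (0:ℝ) 1 | Stabilizable W lam} (1 / (1 + γ))) ∧
    (V * Vᴴ = Vᴴ * V → ∀ lam ∈ Set.Icc (0:ℝ) 1, Stabilizable W lam) := by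
  have hnormal : IsStarNormal V ↔ V * Vᴴ = Vᴴ * V :=
    ((isStarNormal_iff V).trans (commute_iff_eq _ _)).trans eq_comm
  refine ⟨fun hV => ⟨⟨⟨?_, ?_⟩, stabilizable_one_div_one_add hγ.1 hW0 hW1⟩,
    fun lam ⟨_, h⟩ => le_one_div_one_add_of_stabilizable hγ hW0 hW1 (hnormal.not.2 hV) h⟩,
    fun hV lam _ => stabilizable_of_isStarNormal hγ.1 hW0 hW1 (hnormal.2 hV) lam⟩
  · exact div_nonneg zero_le_one (by linarith [hγ.1])
  · exact div_le_one_of_le₀ (by linarith [hγ.1]) (by linarith [hγ.1])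
end

section
/- Assume r₁ > 0 and r₂ > 0, let x ∈ (0, 1/4), and set ξ = 1/(1 + (r₁/r₂)·tan(2πx)), which lies in (0,1). Then for every z ∈ ℝ: z is a maximizer of the function z̃ ↦ F(x, z̃) over ℝ if and only if z + φ₂/(2π) is a maximizer of the function ζ̃ ↦ G_φ(ξ, ζ̃) over ℝ. The same equivalence holds with 'maximizer' replaced by 'minimizer'. -/
/-!
Write θ = 2πx, s = sin θ, c = cos θ, p = r₁ s² and q = r₂ c s, all positive for x ∈ (0, 1/4).
Then ξ = q / (p + q), and after the shift ζ = z + φ₂/(2π) (which turns 4πz + φ₁ into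
4πζ + φ - π/2 and 2πz + φ₂ into 2πζ) one gets F(x, z) = Σ + δ s² + (p + q) G_φ(ξ, ζ).
So z ↦ F(x, z) is a positive multiple of a translate of ζ ↦ G_φ(ξ, ζ) plus a constant,
and the two functions have the same maximizers and minimizers up to the shift.
-/

open Real

section Extremizers

variable {α 𝕜 : Type*} [AddGroup α] [CommRing 𝕜] [LinearOrder 𝕜] [IsStrictOrderedRing 𝕜]

lemma le_iff_le_of_eq_add_mul_comp_add {f g : α → 𝕜} {a B : 𝕜} {t : α} (hB : 0 < B)
    (h : ∀ z, f z = a + B * g (z + t)) (z z' : α) : f z ≤ f z' ↔ g (z + t) ≤ g (z' + t) := by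
  rw [h, h, add_le_add_iff_left, mul_le_mul_iff_right₀ hB]

lemma isMax_iff_isMax_comp_add {f g : α → 𝕜} {a B : 𝕜} {t : α} (hB : 0 < B)
    (h : ∀ z, f z = a + B * g (z + t)) (z : α) :
    (∀ z', f z' ≤ f z) ↔ ∀ ζ', g ζ' ≤ g (z + t) := by
  simp only [le_iff_le_of_eq_add_mul_comp_add hB h]
  exact (Equiv.addRight t).forall_congr_right (q := (g · ≤ g (z + t)))

lemma isMin_iff_isMin_comp_add {f g : α → 𝕜} {a B : 𝕜} {t : α} (hB : 0 < B)
    (h : ∀ z, f z = a + B * g (z + t)) (z : α) :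
    (∀ z', f z ≤ f z') ↔ ∀ ζ', g (z + t) ≤ g ζ' := by
  simp only [le_iff_le_of_eq_add_mul_comp_add hB h]
  exact (Equiv.addRight t).forall_congr_right (q := (g (z + t) ≤ g ·))

end Extremizers

lemma mul_sub_mul_eq_mul_convex_comb {K : Type*} [Field K] {p q : K} (h : p + q ≠ 0) (a b : K) :
    p * a - q * b = (p + q) * ((1 - q / (p + q)) * a - q / (p + q) * b) := by
  field_simp
  ring

lemma one_div_one_add_div_mul_tan {r₁ r₂ θ : ℝ} (hr₂ : r₂ ≠ 0) (hs : sin θ ≠ 0)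
    (hc : cos θ ≠ 0) :
    1 / (1 + r₁ / r₂ * tan θ) = r₂ * cos θ * sin θ / (r₁ * sin θ ^ 2 + r₂ * cos θ * sin θ) := by
  rw [tan_eq_sin_div_cos]
  field_simp
  ring

lemma div_add_mem_Ioo {K : Type*} [Field K] [LinearOrder K] [IsStrictOrderedRing K] {p q : K}
    (hp : 0 < p) (hq : 0 < q) : q / (p + q) ∈ Set.Ioo 0 1 :=
  ⟨by positivity, (div_lt_one (by positivity)).2 (by linarith)⟩

open Matrix Complex

theorem stmt_10_general (Sig δ r₁ φ₁ r₂ φ₂ φ : ℝ)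
    (hr₁ : 0 < r₁) (hr₂ : 0 < r₂)
    (hφ : φ = φ₁ - 2 * φ₂ + Real.pi / 2)
    (F : ℝ → ℝ → ℝ)
    (hF : ∀ x z, F x z = Sig
      + (δ + r₁ * Real.sin (4 * Real.pi * z + φ₁)) * Real.sin (2 * Real.pi * x) ^ 2
      - r₂ * Real.cos (2 * Real.pi * x) * Real.sin (2 * Real.pi * x)
        * Real.sin (2 * Real.pi * z + φ₂))
    (G : ℝ → ℝ → ℝ)
    (hG : ∀ ξ ζ, G ξ ζ = (1 - ξ) * Real.sin (4 * Real.pi * ζ + φ - Real.pi / 2)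
      - ξ * Real.sin (2 * Real.pi * ζ))
    (x : ℝ) (hx : x ∈ Set.Ioo (0:ℝ) (1/4))
    (ξ : ℝ) (hξdef : ξ = 1 / (1 + (r₁ / r₂) * Real.tan (2 * Real.pi * x))) :
    ξ ∈ Set.Ioo (0:ℝ) 1 ∧
    (∀ z : ℝ,
      ((∀ z' : ℝ, F x z' ≤ F x z) ↔
        (∀ ζ' : ℝ, G ξ ζ' ≤ G ξ (z + φ₂ / (2 * Real.pi)))) ∧
      ((∀ z' : ℝ, F x z ≤ F x z') ↔
        (∀ ζ' : ℝ, G ξ (z + φ₂ / (2 * Real.pi)) ≤ G ξ ζ'))) := by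
  have hθ : 2 * π * x ∈ Set.Ioo 0 (π / 2) := by
    obtain ⟨hx₀, hx₁⟩ := hx
    constructor <;> nlinarith [pi_pos]
  have hs : 0 < Real.sin (2 * π * x) :=
    Real.sin_pos_of_pos_of_lt_pi hθ.1 (by linarith [hθ.2, pi_pos])
  have hc : 0 < Real.cos (2 * π * x) :=
    Real.cos_pos_of_mem_Ioo ⟨by linarith [hθ.1, pi_pos], hθ.2⟩
  set p := r₁ * Real.sin (2 * π * x) ^ 2
  set q := r₂ * Real.cos (2 * π * x) * Real.sin (2 * π * x)
  have hp : 0 < p := by positivity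
  have hq : 0 < q := by positivity
  have hξ : ξ = q / (p + q) :=
    hξdef.trans (one_div_one_add_div_mul_tan hr₂.ne' hs.ne' hc.ne')
  have hFG : ∀ z, F x z =
      Sig + δ * Real.sin (2 * π * x) ^ 2 + (p + q) * G ξ (z + φ₂ / (2 * π)) := by
    intro z
    have hshift₄ : 4 * π * (z + φ₂ / (2 * π)) + φ - π / 2 = 4 * π * z + φ₁ := by
      rw [hφ]; field_simp; ring
    have hshift₂ : 2 * π * (z + φ₂ / (2 * π)) = 2 * π * z + φ₂ := by field_simp
    rw [hF, hG, hshift₄, hshift₂, hξ,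
      ← mul_sub_mul_eq_mul_convex_comb (add_pos hp hq).ne']
    ring
  exact ⟨hξ ▸ div_add_mem_Ioo hp hq, fun z =>
    ⟨isMax_iff_isMax_comp_add (add_pos hp hq) hFG z,
      isMin_iff_isMin_comp_add (add_pos hp hq) hFG z⟩⟩

theorem stmt_10 {r : ℕ} (V : Fin r → Matrix (Fin 2) (Fin 2) ℂ)
    (htr : ∀ k, (V k).trace = 0)
    (hdiag : (∑ k, (V k * (V k)ᴴ - (V k)ᴴ * V k)).IsDiag)
    (Sig δ r₁ φ₁ r₂ φ₂ φ : ℝ)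
    (hSig : Sig = ∑ k, (‖V k 0 1‖ ^ 2 + ‖V k 1 0‖ ^ 2))
    (hδ : δ = ∑ k, (2 * ‖V k 0 0‖ ^ 2 -
      (‖V k 0 1‖ ^ 2 + ‖V k 1 0‖ ^ 2) / 2))
    (hr₁ : 0 < r₁) (hr₂ : 0 < r₂)
    (hz₁ : (r₁ : ℂ) * Complex.exp (Complex.I * φ₁) =
      Complex.I * ∑ k, V k 0 1 * (starRingEnd ℂ) (V k 1 0))
    (hz₂ : (r₂ : ℂ) * Complex.exp (Complex.I * φ₂) =
      4 * ∑ k, (starRingEnd ℂ) (V k 0 0) * (V k 1 0))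
    (hφ : φ = φ₁ - 2 * φ₂ + Real.pi / 2)
    (F : ℝ → ℝ → ℝ)
    (hF : ∀ x z, F x z = Sig
      + (δ + r₁ * Real.sin (4 * Real.pi * z + φ₁)) * Real.sin (2 * Real.pi * x) ^ 2
      - r₂ * Real.cos (2 * Real.pi * x) * Real.sin (2 * Real.pi * x)
        * Real.sin (2 * Real.pi * z + φ₂))
    (G : ℝ → ℝ → ℝ)
    (hG : ∀ ξ ζ, G ξ ζ = (1 - ξ) * Real.sin (4 * Real.pi * ζ + φ - Real.pi / 2)
      - ξ * Real.sin (2 * Real.pi * ζ))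
    (x : ℝ) (hx : x ∈ Set.Ioo (0:ℝ) (1/4))
    (ξ : ℝ) (hξdef : ξ = 1 / (1 + (r₁ / r₂) * Real.tan (2 * Real.pi * x))) :
    ξ ∈ Set.Ioo (0:ℝ) 1 ∧
    (∀ z : ℝ,
      ((∀ z' : ℝ, F x z' ≤ F x z) ↔
        (∀ ζ' : ℝ, G ξ ζ' ≤ G ξ (z + φ₂ / (2 * Real.pi)))) ∧
      ((∀ z' : ℝ, F x z ≤ F x z') ↔
        (∀ ζ' : ℝ, G ξ (z + φ₂ / (2 * Real.pi)) ≤ G ξ ζ'))) :=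
  stmt_10_general Sig δ r₁ φ₁ r₂ φ₂ φ hr₁ hr₂ hφ F hF G hG x hx ξ hξdef
end

section
/- Assume r₁ > 0 and r₂ > 0, and set x̃ = (1/(2π))·arctan(r₂/(4r₁)). If φ ≡ 0 (mod 2π), then for every x ∈ [0, 1/4]: (a) max_{z ∈ ℝ} F(x,z) = Σ + δ·sin²(2πx) + sin(2πx)·(r₁ sin(2πx) + r₂ cos(2πx)); (b) for x ∈ [0, x̃], min_{z ∈ ℝ} F(x,z) = Σ + δ·sin²(2πx) + sin(2πx)·(r₁ sin(2πx) − r₂ cos(2πx)), while for x ∈ [x̃, 1/4], min_{z ∈ ℝ} F(x,z) = Σ + (δ − r₁)·sin²(2πx) − (r₂²/(8r₁))·cos²(2πx). If φ ≡ π (mod 2π), then for every x ∈ [0, 1/4]: (c) min_{z ∈ ℝ} F(x,z) = Σ + δ·sin²(2πx) − sin(2πx)·(r₁ sin(2πx) + r₂ cos(2πx)); (d) for x ∈ [0, x̃], max_{z ∈ ℝ} F(x,z) = Σ + δ·sin²(2πx) + sin(2πx)·(−r₁ sin(2πx) + r₂ cos(2πx)), while for x ∈ [x̃, 1/4], max_{z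 ∈ ℝ} F(x,z) = Σ + (δ + r₁)·sin²(2πx) + (r₂²/(8r₁))·cos²(2πx). (All maxima and minima are attained, since F(x,·) is continuous and 1-periodic.) -/
/-!
With `t = sin (2πz + φ₂)`, the double-angle formula turns `sin (4πz + φ₁)` into `2t² - 1` when
`φ ≡ 0` and into `1 - 2t²` when `φ ≡ π`, so `F x` takes exactly the values of a quadratic in
`t ∈ [-1, 1]`. For `φ ≡ 0` it is convex: its maximum is at `t = -1`, and its minimum is at `t = 1`
or at the vertex according as the vertex lies beyond `1` or not, i.e. as
`4 r₁ sin (2πx) ≤ r₂ cos (2πx)` or not, which is the comparison of `x` with `x̃`.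
The case `φ ≡ π` is the reflection `y ↦ 2 (Σ + δ sin² (2πx)) - y` of the case `φ ≡ 0`
(after `t ↦ -t`).
-/

open Real Set

lemma range_comp_sin_affine (g : ℝ → ℝ) {ω : ℝ} (hω : ω ≠ 0) (c : ℝ) :
    range (fun z => g (sin (ω * z + c))) = g '' Icc (-1) 1 := by
  have haff : range (fun z : ℝ => ω * z + c) = univ :=
    range_eq_univ.2 fun y => ⟨(y - c) / ω, by field_simp; ring⟩
  change range (g ∘ sin ∘ fun z => ω * z + c) = _
  rw [range_comp, range_comp, haff, image_univ, range_sin]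

section

variable {a b c : ℝ}

lemma isGreatest_quadratic_Icc (ha : 0 ≤ a) (hb : 0 ≤ b) :
    IsGreatest ((fun t => a * t ^ 2 - b * t + c) '' Icc (-1) 1) (a + b + c) := by
  refine ⟨⟨-1, by norm_num, by ring⟩, ?_⟩
  rintro _ ⟨t, ⟨ht₁, ht₂⟩, rfl⟩
  nlinarith [mul_nonneg ha (mul_nonneg (sub_nonneg.2 ht₂) (neg_le_iff_add_nonneg.1 ht₁)),
    mul_nonneg hb (neg_le_iff_add_nonneg.1 ht₁)]

lemma isLeast_quadratic_Icc_of_two_mul_le (ha : 0 ≤ a) (hab : 2 * a ≤ b) :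
    IsLeast ((fun t => a * t ^ 2 - b * t + c) '' Icc (-1) 1) (a - b + c) := by
  refine ⟨⟨1, by norm_num, by ring⟩, ?_⟩
  rintro _ ⟨t, ⟨ht₁, ht₂⟩, rfl⟩
  have hslope : 0 ≤ b - a * (1 + t) := by nlinarith
  nlinarith [mul_nonneg (sub_nonneg.2 ht₂) hslope]

lemma isLeast_quadratic_Icc_of_le_two_mul (ha : 0 < a) (hb : 0 ≤ b) (hab : b ≤ 2 * a) :
    IsLeast ((fun t => a * t ^ 2 - b * t + c) '' Icc (-1) 1) (c - b ^ 2 / (4 * a)) := by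
  have hvertex : 0 ≤ b / (2 * a) := by positivity
  refine ⟨⟨b / (2 * a), ⟨by linarith, (div_le_one (by positivity)).2 hab⟩, by field_simp; ring⟩, ?_⟩
  rintro _ ⟨t, -, rfl⟩
  have hsq : a * t ^ 2 - b * t + c - (c - b ^ 2 / (4 * a)) = (2 * a * t - b) ^ 2 / (4 * a) := by
    field_simp; ring
  change _ ≤ a * t ^ 2 - b * t + c
  rw [← sub_nonneg, hsq]
  positivity

end

section

variable {p : ℝ}

lemma mul_sin_sub_mul_cos_eq (hp : p ≠ 0) (q θ : ℝ) :
    p * sin θ - q * cos θ = p / cos (arctan (q / p)) * sin (θ - arctan (q / p)) := by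
  have hcos := (cos_arctan_pos (q / p)).ne'
  have htan : sin (arctan (q / p)) = q / p * cos (arctan (q / p)) := by
    rw [← div_eq_iff hcos, ← tan_eq_sin_div_cos, tan_arctan]
  rw [sin_sub, htan]
  field_simp

lemma mul_sin_le_mul_cos_of_le_arctan (hp : 0 < p) {q θ : ℝ}
    (hθ : θ ∈ Icc (-(π / 2)) (arctan (q / p))) : p * sin θ ≤ q * cos θ := by
  have hsin : sin (θ - arctan (q / p)) ≤ 0 :=
    sin_nonpos_of_nonpos_of_neg_pi_le (by linarith [hθ.2])
      (by linarith [hθ.1, arctan_lt_pi_div_two (q / p)])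
  rw [← sub_nonpos, mul_sin_sub_mul_cos_eq hp.ne']
  exact mul_nonpos_of_nonneg_of_nonpos (div_pos hp (cos_arctan_pos _)).le hsin

lemma mul_cos_le_mul_sin_of_arctan_le (hp : 0 < p) {q θ : ℝ}
    (hθ : θ ∈ Icc (arctan (q / p)) (π / 2)) : q * cos θ ≤ p * sin θ := by
  have hsin : 0 ≤ sin (θ - arctan (q / p)) :=
    sin_nonneg_of_nonneg_of_le_pi (by linarith [hθ.1])
      (by linarith [hθ.2, neg_pi_div_two_lt_arctan (q / p)])
  rw [← sub_nonneg, mul_sin_sub_mul_cos_eq hp.ne']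
  exact mul_nonneg (div_pos hp (cos_arctan_pos _)).le hsin

end

/-- `F x z` as a function of `t = sin (2πz + φ₂)` when `φ ≡ 0 (mod 2π)`, with `θ = 2πx`. -/
noncomputable def sinQuadratic (Sig δ r₁ r₂ θ : ℝ) : ℝ → ℝ :=
  fun t => 2 * r₁ * sin θ ^ 2 * t ^ 2 - r₂ * cos θ * sin θ * t + (Sig + (δ - r₁) * sin θ ^ 2)

section

variable {Sig δ r₁ r₂ θ : ℝ}

lemma isGreatest_image_sinQuadratic (hr₁ : 0 ≤ r₁) (hr₂ : 0 ≤ r₂) (hθ : θ ∈ Icc 0 (π / 2)) :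
    IsGreatest (sinQuadratic Sig δ r₁ r₂ θ '' Icc (-1) 1)
      (Sig + δ * sin θ ^ 2 + sin θ * (r₁ * sin θ + r₂ * cos θ)) := by
  have hs := sin_nonneg_of_nonneg_of_le_pi hθ.1 (by linarith [hθ.2, pi_pos])
  have hc := cos_nonneg_of_mem_Icc ⟨by linarith [hθ.1, pi_pos], hθ.2⟩
  have h := isGreatest_quadratic_Icc (a := 2 * r₁ * sin θ ^ 2) (b := r₂ * cos θ * sin θ)
    (c := Sig + (δ - r₁) * sin θ ^ 2) (by positivity) (by positivity)
  rwa [show 2 * r₁ * sin θ ^ 2 + r₂ * cos θ * sin θ + (Sig + (δ - r₁) * sin θ ^ 2)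
    = Sig + δ * sin θ ^ 2 + sin θ * (r₁ * sin θ + r₂ * cos θ) by ring] at h

lemma isLeast_image_sinQuadratic_of_le_arctan (hr₁ : 0 < r₁)
    (hθ : θ ∈ Icc 0 (arctan (r₂ / (4 * r₁)))) :
    IsLeast (sinQuadratic Sig δ r₁ r₂ θ '' Icc (-1) 1)
      (Sig + δ * sin θ ^ 2 + sin θ * (r₁ * sin θ - r₂ * cos θ)) := by
  have hθ' : θ ≤ π / 2 := hθ.2.trans (arctan_lt_pi_div_two _).le
  have hs := sin_nonneg_of_nonneg_of_le_pi hθ.1 (by linarith [pi_pos])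
  have hkey : 4 * r₁ * sin θ ≤ r₂ * cos θ :=
    mul_sin_le_mul_cos_of_le_arctan (by positivity) ⟨by linarith [hθ.1, pi_pos], hθ.2⟩
  have h := isLeast_quadratic_Icc_of_two_mul_le (a := 2 * r₁ * sin θ ^ 2)
    (b := r₂ * cos θ * sin θ) (c := Sig + (δ - r₁) * sin θ ^ 2) (by positivity)
    (by nlinarith [mul_le_mul_of_nonneg_right hkey hs])
  rwa [show 2 * r₁ * sin θ ^ 2 - r₂ * cos θ * sin θ + (Sig + (δ - r₁) * sin θ ^ 2)
    = Sig + δ * sin θ ^ 2 + sin θ * (r₁ * sin θ - r₂ * cos θ) by ring] at h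

lemma isLeast_image_sinQuadratic_of_arctan_le (hr₁ : 0 < r₁) (hr₂ : 0 < r₂)
    (hθ : θ ∈ Icc (arctan (r₂ / (4 * r₁))) (π / 2)) :
    IsLeast (sinQuadratic Sig δ r₁ r₂ θ '' Icc (-1) 1)
      (Sig + (δ - r₁) * sin θ ^ 2 - r₂ ^ 2 / (8 * r₁) * cos θ ^ 2) := by
  have hθ₀ : 0 < θ := (arctan_pos.2 (by positivity)).trans_le hθ.1
  have hs : 0 < sin θ := sin_pos_of_pos_of_lt_pi hθ₀ (by linarith [hθ.2, pi_pos])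
  have hc := cos_nonneg_of_mem_Icc ⟨by linarith [pi_pos], hθ.2⟩
  have hkey : r₂ * cos θ ≤ 4 * r₁ * sin θ := mul_cos_le_mul_sin_of_arctan_le (by positivity) hθ
  have h := isLeast_quadratic_Icc_of_le_two_mul (a := 2 * r₁ * sin θ ^ 2)
    (b := r₂ * cos θ * sin θ) (c := Sig + (δ - r₁) * sin θ ^ 2) (by positivity)
    (by positivity) (by nlinarith [mul_le_mul_of_nonneg_right hkey hs.le])
  rwa [show Sig + (δ - r₁) * sin θ ^ 2 - (r₂ * cos θ * sin θ) ^ 2 / (4 * (2 * r₁ * sin θ ^ 2))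
    = Sig + (δ - r₁) * sin θ ^ 2 - r₂ ^ 2 / (8 * r₁) * cos θ ^ 2 by field_simp; ring] at h

end

lemma sin_two_mul_sub_pi_div_two_add_int_mul_two_pi (θ : ℝ) (n : ℤ) :
    sin (2 * θ - π / 2 + n * (2 * π)) = 2 * sin θ ^ 2 - 1 := by
  rw [sin_add_int_mul_two_pi, sin_sub_pi_div_two, cos_two_mul, cos_sq']
  ring

lemma sin_two_mul_add_pi_div_two_add_int_mul_two_pi (θ : ℝ) (n : ℤ) :
    sin (2 * θ + π / 2 + n * (2 * π)) = 1 - 2 * sin θ ^ 2 := by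
  rw [sin_add_int_mul_two_pi, sin_add_pi_div_two, cos_two_mul, cos_sq']
  ring

lemma two_pi_mul_mem_Icc {a b x : ℝ} (hx : x ∈ Icc a b) : 2 * π * x ∈ Icc (2 * π * a) (2 * π * b) :=
  ⟨mul_le_mul_of_nonneg_left hx.1 two_pi_pos.le, mul_le_mul_of_nonneg_left hx.2 two_pi_pos.le⟩

lemma two_pi_mul_mem_Icc_zero_pi_div_two {x : ℝ} (hx : x ∈ Icc (0 : ℝ) (1 / 4)) :
    2 * π * x ∈ Icc 0 (π / 2) := by
  convert two_pi_mul_mem_Icc hx using 2 <;> ring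

section

variable (F : ℝ → ℝ → ℝ) {Sig δ r₁ r₂ xt : ℝ}

theorem extrema_of_range_eq_image_sinQuadratic (hr₁ : 0 < r₁) (hr₂ : 0 < r₂)
    (hxt : 2 * π * xt = arctan (r₂ / (4 * r₁)))
    (hF : ∀ x, range (F x) = sinQuadratic Sig δ r₁ r₂ (2 * π * x) '' Icc (-1) 1) :
    (∀ x ∈ Icc (0 : ℝ) (1 / 4), IsGreatest (range (F x))
      (Sig + δ * sin (2 * π * x) ^ 2 + sin (2 * π * x)
        * (r₁ * sin (2 * π * x) + r₂ * cos (2 * π * x)))) ∧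
    (∀ x ∈ Icc (0 : ℝ) xt, IsLeast (range (F x))
      (Sig + δ * sin (2 * π * x) ^ 2 + sin (2 * π * x)
        * (r₁ * sin (2 * π * x) - r₂ * cos (2 * π * x)))) ∧
    (∀ x ∈ Icc xt (1 / 4 : ℝ), IsLeast (range (F x))
      (Sig + (δ - r₁) * sin (2 * π * x) ^ 2 - (r₂ ^ 2 / (8 * r₁)) * cos (2 * π * x) ^ 2)) := by
  refine ⟨fun x hx => ?_, fun x hx => ?_, fun x hx => ?_⟩ <;> rw [hF]
  · exact isGreatest_image_sinQuadratic hr₁.le hr₂.le (two_pi_mul_mem_Icc_zero_pi_div_two hx)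
  · refine isLeast_image_sinQuadratic_of_le_arctan hr₁ ?_
    simpa only [mul_zero, hxt] using two_pi_mul_mem_Icc hx
  · refine isLeast_image_sinQuadratic_of_arctan_le hr₁ hr₂ ?_
    simpa only [hxt, show 2 * π * (1 / 4) = π / 2 by ring] using two_pi_mul_mem_Icc hx

theorem extrema_of_range_eq_image_reflect_sinQuadratic (hr₁ : 0 < r₁) (hr₂ : 0 < r₂)
    (hxt : 2 * π * xt = arctan (r₂ / (4 * r₁)))
    (hF : ∀ x, range (F x) = (fun y => 2 * (Sig + δ * sin (2 * π * x) ^ 2) - y) ''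
      (sinQuadratic Sig δ r₁ r₂ (2 * π * x) '' Icc (-1) 1)) :
    (∀ x ∈ Icc (0 : ℝ) (1 / 4), IsLeast (range (F x))
      (Sig + δ * sin (2 * π * x) ^ 2 - sin (2 * π * x)
        * (r₁ * sin (2 * π * x) + r₂ * cos (2 * π * x)))) ∧
    (∀ x ∈ Icc (0 : ℝ) xt, IsGreatest (range (F x))
      (Sig + δ * sin (2 * π * x) ^ 2 + sin (2 * π * x)
        * (-(r₁ * sin (2 * π * x)) + r₂ * cos (2 * π * x)))) ∧
    (∀ x ∈ Icc xt (1 / 4 : ℝ), IsGreatest (range (F x))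
      (Sig + (δ + r₁) * sin (2 * π * x) ^ 2 + (r₂ ^ 2 / (8 * r₁)) * cos (2 * π * x) ^ 2)) := by
  let F₀ : ℝ → ℝ → ℝ := fun x z => sinQuadratic Sig δ r₁ r₂ (2 * π * x) (sin z)
  have hF₀ x : range (F₀ x) = sinQuadratic Sig δ r₁ r₂ (2 * π * x) '' Icc (-1) 1 := by
    rw [← range_sin, ← range_comp]
    rfl
  obtain ⟨hmax, hmin₁, hmin₂⟩ := extrema_of_range_eq_image_sinQuadratic F₀ hr₁ hr₂ hxt hF₀
  refine ⟨fun x hx => ?_, fun x hx => ?_, fun x hx => ?_⟩ <;> rw [hF, ← hF₀]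
  · convert antitone_const_tsub.map_isGreatest (hmax x hx) using 1 <;> first | rfl | ring
  · convert antitone_const_tsub.map_isLeast (hmin₁ x hx) using 1 <;> first | rfl | ring
  · convert antitone_const_tsub.map_isLeast (hmin₂ x hx) using 1 <;> first | rfl | ring

end

open Matrix Complex

theorem stmt_11_general
    (Sig δ r₁ φ₁ r₂ φ₂ φ : ℝ)
    (hr₁ : 0 < r₁) (hr₂ : 0 < r₂)
    (hφ : φ = φ₁ - 2 * φ₂ + Real.pi / 2)
    (F : ℝ → ℝ → ℝ)
    (hF : ∀ x z, F x z = Sig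
      + (δ + r₁ * Real.sin (4 * Real.pi * z + φ₁)) * Real.sin (2 * Real.pi * x) ^ 2
      - r₂ * Real.cos (2 * Real.pi * x) * Real.sin (2 * Real.pi * x)
        * Real.sin (2 * Real.pi * z + φ₂))
    (xt : ℝ) (hxt : xt = (1 / (2 * Real.pi)) * Real.arctan (r₂ / (4 * r₁))) :
    ((∃ n : ℤ, φ = 2 * Real.pi * n) →
      (∀ x ∈ Set.Icc (0:ℝ) (1/4),
        IsGreatest (Set.range (F x))
          (Sig + δ * Real.sin (2 * Real.pi * x) ^ 2 + Real.sin (2 * Real.pi * x)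
            * (r₁ * Real.sin (2 * Real.pi * x) + r₂ * Real.cos (2 * Real.pi * x)))) ∧
      (∀ x ∈ Set.Icc (0:ℝ) xt,
        IsLeast (Set.range (F x))
          (Sig + δ * Real.sin (2 * Real.pi * x) ^ 2 + Real.sin (2 * Real.pi * x)
            * (r₁ * Real.sin (2 * Real.pi * x) - r₂ * Real.cos (2 * Real.pi * x)))) ∧
      (∀ x ∈ Set.Icc xt (1/4 : ℝ),
        IsLeast (Set.range (F x))
          (Sig + (δ - r₁) * Real.sin (2 * Real.pi * x) ^ 2
            - (r₂ ^ 2 / (8 * r₁)) * Real.cos (2 * Real.pi * x) ^ 2))) ∧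
    ((∃ n : ℤ, φ = Real.pi + 2 * Real.pi * n) →
      (∀ x ∈ Set.Icc (0:ℝ) (1/4),
        IsLeast (Set.range (F x))
          (Sig + δ * Real.sin (2 * Real.pi * x) ^ 2 - Real.sin (2 * Real.pi * x)
            * (r₁ * Real.sin (2 * Real.pi * x) + r₂ * Real.cos (2 * Real.pi * x)))) ∧
      (∀ x ∈ Set.Icc (0:ℝ) xt,
        IsGreatest (Set.range (F x))
          (Sig + δ * Real.sin (2 * Real.pi * x) ^ 2 + Real.sin (2 * Real.pi * x)
            * (-(r₁ * Real.sin (2 * Real.pi * x)) + r₂ * Real.cos (2 * Real.pi * x)))) ∧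
      (∀ x ∈ Set.Icc xt (1/4 : ℝ),
        IsGreatest (Set.range (F x))
          (Sig + (δ + r₁) * Real.sin (2 * Real.pi * x) ^ 2
            + (r₂ ^ 2 / (8 * r₁)) * Real.cos (2 * Real.pi * x) ^ 2))) := by
  have hxt' : 2 * Real.pi * xt = Real.arctan (r₂ / (4 * r₁)) := by
    rw [hxt]; field_simp
  subst hφ
  constructor
  · rintro ⟨n, hn⟩
    refine extrema_of_range_eq_image_sinQuadratic F hr₁ hr₂ hxt' fun x => ?_
    rw [← range_comp_sin_affine _ Real.two_pi_pos.ne' φ₂]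
    congr 1; ext z
    have hphase : 4 * Real.pi * z + φ₁
        = 2 * (2 * Real.pi * z + φ₂) - Real.pi / 2 + n * (2 * Real.pi) := by linarith
    rw [hF, hphase, sin_two_mul_sub_pi_div_two_add_int_mul_two_pi, sinQuadratic]
    ring
  · rintro ⟨n, hn⟩
    refine extrema_of_range_eq_image_reflect_sinQuadratic F hr₁ hr₂ hxt' fun x => ?_
    rw [Set.image_image, ← range_comp_sin_affine _ Real.two_pi_pos.ne' (φ₂ + Real.pi)]
    congr 1; ext z
    have hphase : 4 * Real.pi * z + φ₁
        = 2 * (2 * Real.pi * z + φ₂) + Real.pi / 2 + n * (2 * Real.pi) := by linarith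
    rw [hF, hphase, sin_two_mul_add_pi_div_two_add_int_mul_two_pi, ← add_assoc, Real.sin_add_pi,
      sinQuadratic]
    ring

theorem stmt_11 {r : ℕ} (V : Fin r → Matrix (Fin 2) (Fin 2) ℂ)
    (htr : ∀ k, (V k).trace = 0)
    (hdiag : (∑ k, (V k * (V k)ᴴ - (V k)ᴴ * V k)).IsDiag)
    (Sig δ r₁ φ₁ r₂ φ₂ φ : ℝ)
    (hSig : Sig = ∑ k, (‖V k 0 1‖ ^ 2 + ‖V k 1 0‖ ^ 2))
    (hδ : δ = ∑ k, (2 * ‖V k 0 0‖ ^ 2 -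
      (‖V k 0 1‖ ^ 2 + ‖V k 1 0‖ ^ 2) / 2))
    (hr₁ : 0 < r₁) (hr₂ : 0 < r₂)
    (hz₁ : (r₁ : ℂ) * Complex.exp (Complex.I * φ₁) =
      Complex.I * ∑ k, V k 0 1 * (starRingEnd ℂ) (V k 1 0))
    (hz₂ : (r₂ : ℂ) * Complex.exp (Complex.I * φ₂) =
      4 * ∑ k, (starRingEnd ℂ) (V k 0 0) * (V k 1 0))
    (hφ : φ = φ₁ - 2 * φ₂ + Real.pi / 2)
    (F : ℝ → ℝ → ℝ)
    (hF : ∀ x z, F x z = Sig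
      + (δ + r₁ * Real.sin (4 * Real.pi * z + φ₁)) * Real.sin (2 * Real.pi * x) ^ 2
      - r₂ * Real.cos (2 * Real.pi * x) * Real.sin (2 * Real.pi * x)
        * Real.sin (2 * Real.pi * z + φ₂))
    (xt : ℝ) (hxt : xt = (1 / (2 * Real.pi)) * Real.arctan (r₂ / (4 * r₁))) :
    ((∃ n : ℤ, φ = 2 * Real.pi * n) →
      (∀ x ∈ Set.Icc (0:ℝ) (1/4),
        IsGreatest (Set.range (F x))
          (Sig + δ * Real.sin (2 * Real.pi * x) ^ 2 + Real.sin (2 * Real.pi * x)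
            * (r₁ * Real.sin (2 * Real.pi * x) + r₂ * Real.cos (2 * Real.pi * x)))) ∧
      (∀ x ∈ Set.Icc (0:ℝ) xt,
        IsLeast (Set.range (F x))
          (Sig + δ * Real.sin (2 * Real.pi * x) ^ 2 + Real.sin (2 * Real.pi * x)
            * (r₁ * Real.sin (2 * Real.pi * x) - r₂ * Real.cos (2 * Real.pi * x)))) ∧
      (∀ x ∈ Set.Icc xt (1/4 : ℝ),
        IsLeast (Set.range (F x))
          (Sig + (δ - r₁) * Real.sin (2 * Real.pi * x) ^ 2
            - (r₂ ^ 2 / (8 * r₁)) * Real.cos (2 * Real.pi * x) ^ 2))) ∧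
    ((∃ n : ℤ, φ = Real.pi + 2 * Real.pi * n) →
      (∀ x ∈ Set.Icc (0:ℝ) (1/4),
        IsLeast (Set.range (F x))
          (Sig + δ * Real.sin (2 * Real.pi * x) ^ 2 - Real.sin (2 * Real.pi * x)
            * (r₁ * Real.sin (2 * Real.pi * x) + r₂ * Real.cos (2 * Real.pi * x)))) ∧
      (∀ x ∈ Set.Icc (0:ℝ) xt,
        IsGreatest (Set.range (F x))
          (Sig + δ * Real.sin (2 * Real.pi * x) ^ 2 + Real.sin (2 * Real.pi * x)
            * (-(r₁ * Real.sin (2 * Real.pi * x)) + r₂ * Real.cos (2 * Real.pi * x)))) ∧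
      (∀ x ∈ Set.Icc xt (1/4 : ℝ),
        IsGreatest (Set.range (F x))
          (Sig + (δ + r₁) * Real.sin (2 * Real.pi * x) ^ 2
            + (r₂ ^ 2 / (8 * r₁)) * Real.cos (2 * Real.pi * x) ^ 2))) :=
  stmt_11_general Sig δ r₁ φ₁ r₂ φ₂ φ hr₁ hr₂ hφ F hF xt hxt
end

section
/- If there exists a nonzero vector ψ ∈ ℂ² that is an eigenvector of every V_k (k = 1, …, r), then either ∑_{k=1}^r conj(v_k)·w_k = 0 or ∑_{k=1}^r conj(u_k)·w_k is a real number. (In the paper's terminology: a coolable system is either degenerate or odd.) -/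
/-!
Write `V k = !![u k, v k; w k, -u k]`. If `ψ 0 * ψ 1 = 0`, the eigenvector forces all `v k` or all
`w k` to vanish. Otherwise `ψ` is proportional to `(1, z)` with `z ≠ 0`, and being an eigenvector
means `w k = 2 z u k + z² v k`. The `(0, 1)` entry of `∑ [V k, (V k)ᴴ]` says `∑ ū v = T̄` for
`T = ∑ ū w`, hence, with `U = ∑ ‖u‖²` and `P = ∑ ‖v‖²`,
`T = 2 z U + z² T̄` and `S = ∑ v̄ w = z² (2 T / z + P)`.
The first identity makes `T / z` real, and then the second makes `z²` real as soon as `S > 0`.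
For real `z` the sum `T` is real; for imaginary `z`, `S > 0` forces `T / z < -P / 2`, which is
incompatible with the Cauchy–Schwarz bound `‖T‖² ≤ U P`.
-/

open Matrix Complex ComplexConjugate

theorem Matrix.mul_sq_eq_of_trace_eq_zero_of_mulVec_eq_smul {R : Type*} [CommRing R]
    {M : Matrix (Fin 2) (Fin 2) R} (hM : M.trace = 0) {ψ : Fin 2 → R} {c : R}
    (h : M *ᵥ ψ = c • ψ) : M 1 0 * ψ 0 ^ 2 = 2 * M 0 0 * ψ 0 * ψ 1 + M 0 1 * ψ 1 ^ 2 := by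
  have h0 := congrFun h 0
  have h1 := congrFun h 1
  simp only [mulVec, dotProduct, Fin.sum_univ_two, Pi.smul_apply, smul_eq_mul] at h0 h1
  rw [trace_fin_two] at hM
  linear_combination ψ 0 * h1 - ψ 1 * h0 - ψ 0 * ψ 1 * hM

theorem Matrix.commutator_conjTranspose_apply_zero_one {V : Matrix (Fin 2) (Fin 2) ℂ}
    (hV : V.trace = 0) :
    (V * Vᴴ - Vᴴ * V) 0 1 = 2 * (V 0 0 * conj (V 1 0) - conj (V 0 0) * V 0 1) := by
  rw [trace_fin_two, add_eq_zero_iff_eq_neg'] at hV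
  simp only [sub_apply, mul_apply, Fin.sum_univ_two, conjTranspose_apply, hV, map_neg,
    Complex.star_def]
  ring

theorem sum_conj_mul_eq_conj_sum_of_isDiag {ι : Type*} [Fintype ι]
    {V : ι → Matrix (Fin 2) (Fin 2) ℂ} (htr : ∀ k, (V k).trace = 0)
    (hdiag : (∑ k, (V k * (V k)ᴴ - (V k)ᴴ * V k)).IsDiag) :
    ∑ k, conj (V k 0 0) * V k 0 1 = conj (∑ k, conj (V k 0 0) * V k 1 0) := by
  have h01 : ∑ k, (V k * (V k)ᴴ - (V k)ᴴ * V k) 0 1 = 0 := by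
    rw [← Matrix.sum_apply]; exact hdiag (by decide)
  simp only [commutator_conjTranspose_apply_zero_one (htr _), ← Finset.mul_sum,
    Finset.sum_sub_distrib, mul_eq_zero, two_ne_zero, false_or, sub_eq_zero] at h01
  simp only [map_sum, map_mul, conj_conj, h01, mul_comm]

theorem conj_mul_eq_zero_of_mul_sq_eq {ψ : Fin 2 → ℂ} (hψ : ψ ≠ 0) (hdeg : ψ 0 * ψ 1 = 0)
    {u v w : ℂ} (h : w * ψ 0 ^ 2 = 2 * u * ψ 0 * ψ 1 + v * ψ 1 ^ 2) : conj v * w = 0 := by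
  have hψ' : ¬(ψ 0 = 0 ∧ ψ 1 = 0) := fun h01 => hψ (funext (Fin.forall_fin_two.mpr h01))
  rcases mul_eq_zero.mp hdeg with h0 | h1
  · have h1 : ψ 1 ≠ 0 := fun h1 => hψ' ⟨h0, h1⟩
    simp_all
  · have h0 : ψ 0 ≠ 0 := fun h0 => hψ' ⟨h0, h1⟩
    simp_all

theorem norm_sum_conj_mul_sq_le {ι : Type*} [Fintype ι] (u v : ι → ℂ) :
    ‖∑ k, conj (u k) * v k‖ ^ 2 ≤ (∑ k, ‖u k‖ ^ 2) * ∑ k, ‖v k‖ ^ 2 := calc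
  _ ≤ (∑ k, ‖u k‖ * ‖v k‖) ^ 2 := by
    gcongr
    simpa only [norm_mul, norm_conj] using norm_sum_le Finset.univ fun k => conj (u k) * v k
  _ ≤ _ := Finset.sum_mul_sq_le_sq_mul_sq _ _ _

theorem Complex.exists_ofReal_mul_of_eq_two_mul_add_sq_mul_conj {z T : ℂ} {U : ℝ} (hz : z ≠ 0)
    (hT : T = 2 * z * U + z ^ 2 * conj T) :
    ∃ x : ℝ, T = z * x ∧ x * (1 - ‖z‖ ^ 2) = 2 * U := by
  set X := T / z
  have hTX : T = z * X := (mul_div_cancel₀ T hz).symm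
  have hX : X = 2 * U + (‖z‖ ^ 2 : ℝ) * conj X := by
    apply mul_left_cancel₀ hz
    have hconj : conj T = conj z * conj X := by rw [hTX, map_mul]
    rw [← hTX, ofReal_pow, ← mul_conj']
    linear_combination hT + z ^ 2 * hconj
  have him := congrArg im hX
  have hre := congrArg re hX
  simp only [add_im, add_re, mul_im, mul_re, ofReal_re, ofReal_im, conj_re, conj_im,
    re_ofNat, im_ofNat] at him hre
  have hXim : X.im = 0 := by nlinarith [sq_nonneg ‖z‖]
  refine ⟨X.re, ?_, by linarith⟩
  rw [hTX, ← re_add_im X, hXim]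
  simp

theorem Complex.eq_zero_or_im_eq_zero_of_sq_norm_le {z T : ℂ} {U P S : ℝ} (hz : z ≠ 0)
    (hP : 0 ≤ P) (hS : 0 ≤ S)
    (hT : T = 2 * z * U + z ^ 2 * conj T) (hST : (S : ℂ) = 2 * z * T + z ^ 2 * P)
    (hCS : ‖T‖ ^ 2 ≤ U * P) : S = 0 ∨ T.im = 0 := by
  obtain ⟨x, rfl, hx⟩ := exists_ofReal_mul_of_eq_two_mul_add_sq_mul_conj hz hT
  rcases hS.eq_or_lt with hS0 | hSpos
  · exact .inl hS0.symm
  right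
  have hSz : (S : ℂ) = z ^ 2 * (2 * x + P) := by rw [hST]; ring
  have hre := congrArg re hSz
  have him := congrArg im hSz
  simp only [sq, mul_re, mul_im, ofReal_re, ofReal_im, add_re, add_im, re_ofNat, im_ofNat,
    mul_zero, zero_mul, sub_zero, add_zero] at hre him
  rw [norm_mul, mul_pow, Complex.sq_norm, normSq_apply, norm_real, Real.norm_eq_abs, sq_abs] at hCS
  rw [Complex.sq_norm, normSq_apply] at hx
  simp only [mul_im, ofReal_re, ofReal_im, mul_zero]
  have hne : 2 * x + P ≠ 0 := by
    intro h
    rw [h, mul_zero] at hre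
    exact hSpos.ne' hre
  have hreim : z.re * z.im = 0 := by
    have : 2 * (z.re * z.im) * (2 * x + P) = 0 := by linarith
    simpa [hne] using this
  rcases mul_eq_zero.mp hreim with hre0 | him0
  · exfalso
    rw [hre0] at hre hx hCS
    have hneg : 2 * x + P < 0 := by nlinarith
    nlinarith [sq_nonneg z.im, sq_nonneg x]
  · simp [him0]

theorem sum_conj_mul_eq_zero_or_exists_ofReal {ι : Type*} [Fintype ι] {u v w : ι → ℂ} {z : ℂ}
    (hz : z ≠ 0) (hw : ∀ k, w k = 2 * u k * z + v k * z ^ 2)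
    (hQ : ∑ k, conj (u k) * v k = conj (∑ k, conj (u k) * w k))
    (hS : ∃ c : ℝ, 0 ≤ c ∧ ∑ k, conj (v k) * w k = c) :
    ∑ k, conj (v k) * w k = 0 ∨ ∃ t : ℝ, ∑ k, conj (u k) * w k = t := by
  obtain ⟨S, hS, hSsum⟩ := hS
  set T := ∑ k, conj (u k) * w k
  have hTrel : T = 2 * z * ((∑ k, ‖u k‖ ^ 2 : ℝ) : ℂ) + z ^ 2 * conj T := calc
    T = ∑ k, (2 * z * (conj (u k) * u k) + z ^ 2 * (conj (u k) * v k)) :=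
      Finset.sum_congr rfl fun k _ => by rw [hw]; ring
    _ = _ := by
      simp only [Finset.sum_add_distrib, ← Finset.mul_sum, hQ, conj_mul', ofReal_sum, ofReal_pow]
  have hSrel : (S : ℂ) = 2 * z * T + z ^ 2 * ((∑ k, ‖v k‖ ^ 2 : ℝ) : ℂ) := calc
    (S : ℂ) = ∑ k, (2 * z * conj (conj (u k) * v k) + z ^ 2 * (conj (v k) * v k)) := by
      rw [← hSsum]
      exact Finset.sum_congr rfl fun k _ => by rw [hw, map_mul, conj_conj]; ring
    _ = _ := by
      simp only [Finset.sum_add_distrib, ← Finset.mul_sum, ← map_sum, hQ, conj_conj, conj_mul',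
        ofReal_sum, ofReal_pow]
  have hCS : ‖T‖ ^ 2 ≤ (∑ k, ‖u k‖ ^ 2) * ∑ k, ‖v k‖ ^ 2 := by
    rw [← norm_conj, ← hQ]
    exact norm_sum_conj_mul_sq_le u v
  rcases eq_zero_or_im_eq_zero_of_sq_norm_le hz (by positivity) hS hTrel hSrel hCS with h | h
  · exact .inl (by rw [hSsum, h, ofReal_zero])
  · exact .inr (conj_eq_iff_real.mp (conj_eq_iff_im.mpr h))

theorem stmt_12 {r : ℕ} (V : Fin r → Matrix (Fin 2) (Fin 2) ℂ)
    (htr : ∀ k, (V k).trace = 0)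
    (hdiag : (∑ k, (V k * (V k)ᴴ - (V k)ᴴ * V k)).IsDiag)
    (hvw : ∃ c : ℝ, 0 ≤ c ∧
      ∑ k, (starRingEnd ℂ) (V k 0 1) * V k 1 0 = (c : ℂ))
    (hcool : ∃ ψ : Fin 2 → ℂ, ψ ≠ 0 ∧ ∀ k, ∃ c : ℂ, (V k).mulVec ψ = c • ψ) :
    (∑ k, (starRingEnd ℂ) (V k 0 1) * V k 1 0 = 0) ∨
    (∃ t : ℝ, ∑ k, (starRingEnd ℂ) (V k 0 0) * V k 1 0 = (t : ℂ)) := by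
  obtain ⟨ψ, hψ, heig⟩ := hcool
  have hrel : ∀ k, V k 1 0 * ψ 0 ^ 2 = 2 * V k 0 0 * ψ 0 * ψ 1 + V k 0 1 * ψ 1 ^ 2 :=
    fun k => (heig k).elim fun _ h => mul_sq_eq_of_trace_eq_zero_of_mulVec_eq_smul (htr k) h
  by_cases hdeg : ψ 0 * ψ 1 = 0
  · exact .inl (Finset.sum_eq_zero fun k _ => conj_mul_eq_zero_of_mul_sq_eq hψ hdeg (hrel k))
  obtain ⟨h0, h1⟩ := mul_ne_zero_iff.mp hdeg
  refine sum_conj_mul_eq_zero_or_exists_ofReal (div_ne_zero h1 h0) (fun k => ?_)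
    (sum_conj_mul_eq_conj_sum_of_isDiag htr hdiag) hvw
  field_simp
  linear_combination hrel k
end

section
/- Assume every V_k is normal and the matrices V_1, …, V_r pairwise commute. Then μ(0) = (1/4)·∑_{k=1}^r (2·tr(V_k* V_k) − |tr V_k|²); equivalently, μ(0) = (1/4)·∑_{k=1}^r |λ₁(V_k) − λ₂(V_k)|², where λ₁(V_k), λ₂(V_k) are the two eigenvalues of V_k. -/
open Matrix Complex

/-!
Let `g(A) = 2 tr(AᴴA) - |tr A|²` (`eigenGapSq`). For a normal `2 × 2` matrix, `|A₀₁| = |A₁₀|`, so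
`g(A) = |A₀₀ - A₁₁|² + 4 |A₀₁|²`; as `g` is invariant under unitary conjugation, every summand of
`J₁₂(U)` is at most `g(Vₖ) / 4`. Commuting normal matrices are diagonalised by a common
`U ∈ SU(2)` (a non-scalar member has distinct eigenvalues, and whatever commutes with it is then
diagonal), and following `U` by the rotation through `π / 4` turns every `diag(d₀, d₁)` into a
matrix with off-diagonal entry of modulus `|d₀ - d₁| / 2`, so all the bounds are attained at
once. Finally `g(A) = |λ₁ - λ₂|²`, the eigenvalues being the diagonal entries of the
diagonalised matrix.
-/

open ComplexConjugate

namespace Matrix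

lemma IsDiag.isDiag_of_commute {n α : Type*} [Fintype n] [CommRing α] [NoZeroDivisors α]
    {D B : Matrix n n α} (hD : D.IsDiag) (hinj : Function.Injective D.diag) (h : Commute B D) :
    B.IsDiag := by
  intro i j hij
  have hij' := congrFun (congrFun h.eq i) j
  rw [mul_apply, mul_apply, Finset.sum_eq_single j (fun k _ hk ↦ by rw [hD hk, mul_zero])
    (by simp), Finset.sum_eq_single i (fun k _ hk ↦ by rw [hD hk.symm, zero_mul]) (by simp)]
    at hij'
  have hne : D j j - D i i ≠ 0 := sub_ne_zero.mpr fun h ↦ hij (hinj h).symm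
  have hprod : B i j * (D j j - D i i) = 0 := by linear_combination hij'
  exact (mul_eq_zero.mp hprod).resolve_right hne

section UnitaryConj

variable {n α : Type*} [Fintype n] [CommRing α] [StarRing α] {U : Matrix n n α}

lemma conjTranspose_unitaryConj (A : Matrix n n α) : (Uᴴ * A * U)ᴴ = Uᴴ * Aᴴ * U := by
  simp only [conjTranspose_mul, conjTranspose_conjTranspose, Matrix.mul_assoc]

variable [DecidableEq n]

lemma unitaryConj_mul_unitaryConj (hU : U ∈ unitaryGroup n α) (A B : Matrix n n α) :
    (Uᴴ * A * U) * (Uᴴ * B * U) = Uᴴ * (A * B) * U := by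
  have h : U * Uᴴ = 1 := hU.2
  simp only [Matrix.mul_assoc]
  rw [← Matrix.mul_assoc U, h, Matrix.one_mul]

lemma trace_unitaryConj (hU : U ∈ unitaryGroup n α) (A : Matrix n n α) :
    (Uᴴ * A * U).trace = A.trace := by
  rw [trace_mul_cycle, show U * Uᴴ = 1 from hU.2, Matrix.one_mul]

lemma det_unitaryConj (hU : U ∈ unitaryGroup n α) (A : Matrix n n α) :
    (Uᴴ * A * U).det = A.det := by
  rw [det_mul, det_mul, mul_right_comm, ← det_mul, show Uᴴ * U = 1 from hU.1, det_one, one_mul]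

lemma unitaryConj_normal (hU : U ∈ unitaryGroup n α) {A : Matrix n n α}
    (hA : A * Aᴴ = Aᴴ * A) :
    (Uᴴ * A * U) * (Uᴴ * A * U)ᴴ = (Uᴴ * A * U)ᴴ * (Uᴴ * A * U) := by
  rw [conjTranspose_unitaryConj, unitaryConj_mul_unitaryConj hU, unitaryConj_mul_unitaryConj hU, hA]

lemma unitaryConj_apply_of_mulVec_col (hU : U ∈ unitaryGroup n α) {A : Matrix n n α} {μ : α}
    {j : n} (h : A *ᵥ (fun i ↦ U i j) = μ • fun i ↦ U i j) (i : n) :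
    (Uᴴ * A * U) i j = μ * (1 : Matrix n n α) i j := by
  have hcol : (fun i ↦ (A * U) i j) = μ • fun i ↦ U i j := by
    rw [← h]; ext i; simp [mul_apply, mulVec, dotProduct]
  rw [Matrix.mul_assoc, mul_apply, ← show Uᴴ * U = 1 from hU.1, mul_apply, Finset.mul_sum]
  refine Finset.sum_congr rfl fun k _ ↦ ?_
  rw [congrFun hcol k]; simp [mul_left_comm]

lemma eq_smul_one_of_unitaryConj_eq (hU : U ∈ unitaryGroup n α) {A : Matrix n n α} {c : α}
    (h : Uᴴ * A * U = c • 1) : A = c • 1 := by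
  have hU' : U * Uᴴ = 1 := hU.2
  calc A = (U * Uᴴ) * A * (U * Uᴴ) := by rw [hU', Matrix.one_mul, Matrix.mul_one]
    _ = U * (Uᴴ * A * U) * Uᴴ := by simp only [Matrix.mul_assoc]
    _ = c • 1 := by rw [h, Matrix.mul_smul, Matrix.mul_one, Matrix.smul_mul, hU']

end UnitaryConj

variable {A : Matrix (Fin 2) (Fin 2) ℂ}

/-- For normal `A` this is `‖λ₁ - λ₂‖²`, see `eigenGapSq_eq_of_charpoly_eq`. -/
noncomputable def eigenGapSq (A : Matrix (Fin 2) (Fin 2) ℂ) : ℝ :=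
  2 * (Aᴴ * A).trace.re - ‖A.trace‖ ^ 2

lemma normSq_apply_zero_one_eq_of_normal (hA : A * Aᴴ = Aᴴ * A) :
    normSq (A 0 1) = normSq (A 1 0) := by
  have h00 := congrFun (congrFun hA 0) 0
  simp only [mul_apply, Fin.sum_univ_two, conjTranspose_apply, star_def] at h00
  have : (normSq (A 0 1) : ℂ) = normSq (A 1 0) := by
    rw [normSq_eq_conj_mul_self, normSq_eq_conj_mul_self]
    linear_combination h00
  exact_mod_cast this

lemma eigenGapSq_eq_of_normal (hA : A * Aᴴ = Aᴴ * A) :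
    eigenGapSq A = ‖A 0 0 - A 1 1‖ ^ 2 + 4 * ‖A 0 1‖ ^ 2 := by
  have h := normSq_apply_zero_one_eq_of_normal hA
  simp only [eigenGapSq, trace_fin_two, mul_apply, Fin.sum_univ_two, conjTranspose_apply,
    star_def, Complex.sq_norm, add_re, mul_re, conj_re, conj_im, normSq_apply, sub_re, sub_im,
    add_im] at h ⊢
  linarith

lemma eigenGapSq_unitaryConj {U : Matrix (Fin 2) (Fin 2) ℂ} (hU : U ∈ unitaryGroup (Fin 2) ℂ)
    (A : Matrix (Fin 2) (Fin 2) ℂ) : eigenGapSq (Uᴴ * A * U) = eigenGapSq A := by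
  rw [eigenGapSq, eigenGapSq, conjTranspose_unitaryConj, unitaryConj_mul_unitaryConj hU,
    trace_unitaryConj hU, trace_unitaryConj hU]

lemma four_mul_sq_norm_unitaryConj_apply_zero_one_le {U : Matrix (Fin 2) (Fin 2) ℂ}
    (hU : U ∈ unitaryGroup (Fin 2) ℂ) (hA : A * Aᴴ = Aᴴ * A) :
    4 * ‖(Uᴴ * A * U) 0 1‖ ^ 2 ≤ eigenGapSq A := by
  rw [← eigenGapSq_unitaryConj hU, eigenGapSq_eq_of_normal (unitaryConj_normal hU hA)]
  exact le_add_of_nonneg_left (sq_nonneg _)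

lemma fin_two_mem_specialUnitaryGroup {a b : ℂ} (h : normSq a + normSq b = 1) :
    !![a, -conj b; b, conj a] ∈ specialUnitaryGroup (Fin 2) ℂ := by
  have h' : a * conj a + b * conj b = 1 := by
    simp only [mul_conj]; exact_mod_cast h
  rw [mem_specialUnitaryGroup_iff, mem_unitaryGroup_iff', star_eq_conjTranspose, det_fin_two_of]
  refine ⟨?_, by linear_combination h'⟩
  ext i j
  fin_cases i <;> fin_cases j <;> simp [mul_apply, mul_comm, add_comm, h']

lemma exists_eigenvector_normSq_add_normSq_eq_one (A : Matrix (Fin 2) (Fin 2) ℂ) :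
    ∃ μ a b : ℂ, normSq a + normSq b = 1 ∧ A *ᵥ ![a, b] = μ • ![a, b] := by
  obtain ⟨μ, hμ⟩ := Module.End.exists_eigenvalue (toLin' A)
  obtain ⟨v, hv, hv0⟩ := hμ.exists_hasEigenvector
  rw [Module.End.mem_eigenspace_iff, toLin'_apply] at hv
  have hs : 0 < normSq (v 0) + normSq (v 1) := by
    by_contra! hs
    have h0 := normSq_nonneg (v 0)
    have h1 := normSq_nonneg (v 1)
    have hv00 : v 0 = 0 := normSq_eq_zero.mp (by linarith)
    have hv10 : v 1 = 0 := normSq_eq_zero.mp (by linarith)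
    exact hv0 (by ext i; fin_cases i <;> simp [hv00, hv10])
  set c : ℂ := (((√(normSq (v 0) + normSq (v 1)))⁻¹ : ℝ) : ℂ)
  have hc : normSq c = (normSq (v 0) + normSq (v 1))⁻¹ := by
    rw [normSq_ofReal, ← mul_inv, Real.mul_self_sqrt hs.le]
  have hcv : ![c * v 0, c * v 1] = c • v := by
    ext i; fin_cases i <;> rfl
  refine ⟨μ, c * v 0, c * v 1, ?_, ?_⟩
  · rw [normSq_mul, normSq_mul, ← mul_add, hc, inv_mul_cancel₀ hs.ne']
  · rw [hcv, mulVec_smul, hv, smul_comm]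

lemma exists_mem_specialUnitaryGroup_isDiag_unitaryConj (hA : A * Aᴴ = Aᴴ * A) :
    ∃ U ∈ specialUnitaryGroup (Fin 2) ℂ, (Uᴴ * A * U).IsDiag := by
  obtain ⟨μ, a, b, hab, hv⟩ := exists_eigenvector_normSq_add_normSq_eq_one A
  have hU := fin_two_mem_specialUnitaryGroup hab
  set U := !![a, -conj b; b, conj a]
  have hcol : (fun i ↦ U i 0) = ![a, b] := by ext i; fin_cases i <;> rfl
  have h10 : (Uᴴ * A * U) 1 0 = 0 := by
    rw [unitaryConj_apply_of_mulVec_col hU.1 (hcol ▸ hv)]; simp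
  have h01 : (Uᴴ * A * U) 0 1 = 0 := by
    rw [← normSq_eq_zero, normSq_apply_zero_one_eq_of_normal (unitaryConj_normal hU.1 hA), h10,
      map_zero]
  refine ⟨U, hU, fun i j hij ↦ ?_⟩
  fin_cases i <;> fin_cases j <;> simp_all

lemma exists_mem_specialUnitaryGroup_forall_isDiag_unitaryConj {ι : Type*}
    (V : ι → Matrix (Fin 2) (Fin 2) ℂ) (hnormal : ∀ k, V k * (V k)ᴴ = (V k)ᴴ * V k)
    (hcomm : ∀ k l, V k * V l = V l * V k) :
    ∃ U ∈ specialUnitaryGroup (Fin 2) ℂ, ∀ k, (Uᴴ * V k * U).IsDiag := by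
  by_cases hscalar : ∀ k, ∃ c : ℂ, V k = c • 1
  · refine ⟨1, one_mem _, fun k ↦ ?_⟩
    obtain ⟨c, hc⟩ := hscalar k
    rw [conjTranspose_one, Matrix.one_mul, Matrix.mul_one, hc]
    exact isDiag_smul_one _ c
  push Not at hscalar
  obtain ⟨m, hm⟩ := hscalar
  obtain ⟨U, hU, hD⟩ := exists_mem_specialUnitaryGroup_isDiag_unitaryConj (hnormal m)
  have hne : (Uᴴ * V m * U) 0 0 ≠ (Uᴴ * V m * U) 1 1 := fun h ↦
    hm ((Uᴴ * V m * U) 1 1) <| eq_smul_one_of_unitaryConj_eq hU.1 <| by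
      ext i j; fin_cases i <;> fin_cases j <;> simp [h, hD zero_ne_one, hD one_ne_zero]
  have hinj : Function.Injective (Uᴴ * V m * U).diag := by
    intro i j hij
    fin_cases i <;> fin_cases j <;> simp_all [hne.symm]
  refine ⟨U, hU, fun k ↦ hD.isDiag_of_commute hinj ?_⟩
  rw [Commute, SemiconjBy, unitaryConj_mul_unitaryConj hU.1, unitaryConj_mul_unitaryConj hU.1,
    hcomm]

lemma exists_rotation_four_mul_sq_norm_apply_zero_one :
    ∃ R ∈ specialUnitaryGroup (Fin 2) ℂ, ∀ D : Matrix (Fin 2) (Fin 2) ℂ, D.IsDiag →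
      4 * ‖(Rᴴ * D * R) 0 1‖ ^ 2 = ‖D 0 0 - D 1 1‖ ^ 2 := by
  set c : ℂ := (((√2)⁻¹ : ℝ) : ℂ)
  have hc : ‖c‖ ^ 2 = 1 / 2 := by
    rw [Complex.sq_norm, normSq_ofReal, ← mul_inv, Real.mul_self_sqrt zero_le_two, one_div]
  have hR : !![c, -conj c; c, conj c] ∈ specialUnitaryGroup (Fin 2) ℂ :=
    fin_two_mem_specialUnitaryGroup (by rw [← Complex.sq_norm, hc]; norm_num)
  refine ⟨_, hR, fun D hD ↦ ?_⟩
  have hentry : (!![c, -conj c; c, conj c]ᴴ * D * !![c, -conj c; c, conj c]) 0 1 =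
      -(conj c * conj c) * (D 0 0 - D 1 1) := by
    simp only [mul_apply, conjTranspose_apply, of_apply, cons_val', cons_val_zero, cons_val_one,
      cons_val_fin_one, RCLike.star_def, Fin.sum_univ_two, hD zero_ne_one, hD one_ne_zero]
    ring
  rw [hentry, norm_mul, norm_neg, norm_mul, RCLike.norm_conj, mul_pow, mul_pow, hc]
  ring

lemma eigenGapSq_eq_of_isDiag_unitaryConj {U : Matrix (Fin 2) (Fin 2) ℂ}
    (hU : U ∈ unitaryGroup (Fin 2) ℂ) (hA : A * Aᴴ = Aᴴ * A) (hD : (Uᴴ * A * U).IsDiag) :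
    eigenGapSq A = ‖(Uᴴ * A * U) 0 0 - (Uᴴ * A * U) 1 1‖ ^ 2 := by
  rw [← eigenGapSq_unitaryConj hU, eigenGapSq_eq_of_normal (unitaryConj_normal hU hA),
    hD zero_ne_one, norm_zero]
  ring

open Polynomial in
lemma trace_eq_add_and_det_eq_mul_of_charpoly_eq {K : Type*} [Field K] [IsAlgClosed K]
    {A : Matrix (Fin 2) (Fin 2) K} {e₁ e₂ : K} (h : A.charpoly = (X - C e₁) * (X - C e₂)) :
    A.trace = e₁ + e₂ ∧ A.det = e₁ * e₂ := by
  have hroots : A.charpoly.roots = {e₁, e₂} := by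
    rw [h, roots_mul (mul_ne_zero (X_sub_C_ne_zero _) (X_sub_C_ne_zero _)), roots_X_sub_C,
      roots_X_sub_C, Multiset.singleton_add]
    rfl
  rw [trace_eq_sum_roots_charpoly, det_eq_prod_roots_charpoly, hroots]
  simp

open Polynomial in
lemma eigenGapSq_eq_of_charpoly_eq (hA : A * Aᴴ = Aᴴ * A) {e₁ e₂ : ℂ}
    (h : A.charpoly = (X - C e₁) * (X - C e₂)) :
    eigenGapSq A = ‖e₁ - e₂‖ ^ 2 := by
  obtain ⟨U, hU, hD⟩ := exists_mem_specialUnitaryGroup_isDiag_unitaryConj hA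
  obtain ⟨htr, hdet⟩ := trace_eq_add_and_det_eq_mul_of_charpoly_eq h
  rw [← trace_unitaryConj hU.1, trace_fin_two] at htr
  rw [← det_unitaryConj hU.1, det_fin_two, hD zero_ne_one, zero_mul, sub_zero] at hdet
  have hsq : ((Uᴴ * A * U) 0 0 - (Uᴴ * A * U) 1 1) ^ 2 = (e₁ - e₂) ^ 2 := by
    linear_combination ((Uᴴ * A * U) 0 0 + (Uᴴ * A * U) 1 1 + e₁ + e₂) * htr - 4 * hdet
  rw [eigenGapSq_eq_of_isDiag_unitaryConj hU.1 hA hD, ← norm_pow, hsq, norm_pow]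

end Matrix

open Matrix

theorem isGreatest_Jf {r : ℕ} (V : Fin r → Matrix (Fin 2) (Fin 2) ℂ)
    (hnormal : ∀ k, V k * (V k)ᴴ = (V k)ᴴ * V k) (hcomm : ∀ k l, V k * V l = V l * V k) :
    IsGreatest {y : ℝ | ∃ U ∈ specialUnitaryGroup (Fin 2) ℂ, y = Jf V U 0 1}
      ((1 / 4) * ∑ k, eigenGapSq (V k)) := by
  obtain ⟨U, hU, hD⟩ := exists_mem_specialUnitaryGroup_forall_isDiag_unitaryConj V hnormal hcomm
  obtain ⟨R, hR, hRD⟩ := exists_rotation_four_mul_sq_norm_apply_zero_one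
  refine ⟨⟨U * R, mul_mem hU hR, ?_⟩, ?_⟩
  · rw [Jf, Finset.mul_sum]
    refine Finset.sum_congr rfl fun k _ ↦ ?_
    have hW : (U * R)ᴴ * V k * (U * R) = Rᴴ * (Uᴴ * V k * U) * R := by
      simp only [conjTranspose_mul, Matrix.mul_assoc]
    rw [hW, eigenGapSq_eq_of_isDiag_unitaryConj hU.1 (hnormal k) (hD k), ← hRD _ (hD k)]
    ring
  · rintro _ ⟨W, hW, rfl⟩
    rw [Jf, Finset.mul_sum]
    refine Finset.sum_le_sum fun k _ ↦ ?_
    linarith [four_mul_sq_norm_unitaryConj_apply_zero_one_le hW.1 (hnormal k)]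

theorem stmt_15 {r : ℕ} (V : Fin r → Matrix (Fin 2) (Fin 2) ℂ)
    (hnormal : ∀ k, V k * (V k)ᴴ = (V k)ᴴ * V k)
    (hcomm : ∀ k l, V k * V l = V l * V k)
    (μ0 : ℝ)
    (hμ0 : IsGreatest {y : ℝ | ∃ U ∈ Matrix.specialUnitaryGroup (Fin 2) ℂ,
      y = Jf V U 0 1} μ0) :
    μ0 = (1/4) * ∑ k, (2 * ((V k)ᴴ * V k).trace.re - ‖(V k).trace‖ ^ 2) ∧
    (∀ e₁ e₂ : Fin r → ℂ,
      (∀ k, (V k).charpoly =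
        (Polynomial.X - Polynomial.C (e₁ k)) * (Polynomial.X - Polynomial.C (e₂ k))) →
      μ0 = (1/4) * ∑ k, ‖e₁ k - e₂ k‖ ^ 2) := by
  have hμ : μ0 = (1 / 4) * ∑ k, eigenGapSq (V k) := hμ0.unique (isGreatest_Jf V hnormal hcomm)
  refine ⟨hμ, fun e₁ e₂ hchar ↦ ?_⟩
  rw [hμ]
  congr 1
  exact Finset.sum_congr rfl fun k _ ↦ eigenGapSq_eq_of_charpoly_eq (hnormal k) (hchar k)
end

section
/- Let γ₁ ≥ γ₂ ≥ γ₃ ≥ 0 and take the three Lindblad terms V₁ = √γ₁·σ_x, V₂ = √γ₂·σ_y, V₃ = √γ₃·σ_z. Then the set of achievable values {J_12(U) : U ∈ SU(2)} equals the closed interval [γ₂ + γ₃, γ₁ + γ₂]. -/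
open Matrix Complex

/-
Every `U ∈ SU(2)` has the Cayley–Klein form `!![a, b; -b̄, ā]` with `|a|² + |b|² = 1`. Writing
`s = |a|²`, `t = |b|²`, `x = Re (a² b²)`, a direct computation gives
`J₁₂(U) = γ₁ (s² + t² - 2x) + γ₂ (s² + t² + 2x) + 4 γ₃ s t`.
As `s + t = 1`, this equals `γ₁ + γ₂ - 2 s t (γ₁ + γ₂ - 2 γ₃) - 2 (γ₁ - γ₂) x`, which lies in
`[γ₂ + γ₃, γ₁ + γ₂]` because `|x| ≤ s t ≤ 1/4`. On the real rotations `a = cos θ`,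
`b = sin θ` it equals `γ₁ + γ₂ - (γ₁ - γ₃) sin² 2θ`, which sweeps out the whole interval as `θ`
runs over `[0, π/4]`.
-/

noncomputable def cayleyKlein (a b : ℂ) : Matrix (Fin 2) (Fin 2) ℂ :=
  !![a, b; -(starRingEnd ℂ) b, (starRingEnd ℂ) a]

lemma cayleyKlein_mem_specialUnitaryGroup {a b : ℂ} (h : normSq a + normSq b = 1) :
    cayleyKlein a b ∈ specialUnitaryGroup (Fin 2) ℂ := by
  have h' : a * (starRingEnd ℂ) a + b * (starRingEnd ℂ) b = 1 := by
    rw [mul_conj, mul_conj]; exact_mod_cast h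
  refine mem_specialUnitaryGroup_iff.mpr ⟨mem_unitaryGroup_iff'.mpr ?_, ?_⟩
  · ext i j
    fin_cases i <;> fin_cases j <;>
      simp [cayleyKlein, mul_apply, Fin.sum_univ_two, one_apply]
    · linear_combination h'
    · ring
    · ring
    · linear_combination h'
  · simp only [cayleyKlein, det_fin_two_of]
    linear_combination h'

lemma mem_specialUnitaryGroup_fin_two_iff {U : Matrix (Fin 2) (Fin 2) ℂ} :
    U ∈ specialUnitaryGroup (Fin 2) ℂ ↔
      ∃ a b : ℂ, normSq a + normSq b = 1 ∧ U = cayleyKlein a b := by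
  refine ⟨fun hU => ?_, fun ⟨a, b, hab, hU⟩ =>
    hU ▸ cayleyKlein_mem_specialUnitaryGroup hab⟩
  obtain ⟨hu, hdet⟩ := mem_specialUnitaryGroup_iff.mp hU
  have hadj : Uᴴ = U.adjugate :=
    left_inv_eq_right_inv (mem_unitaryGroup_iff'.mp hu) (by rw [mul_adjugate, hdet, one_smul])
  have h00 := congrFun (congrFun hadj 0) 0
  have h01 := congrFun (congrFun hadj 0) 1
  simp only [conjTranspose_apply, adjugate_fin_two, of_apply, cons_val', cons_val_zero,
    cons_val_one, empty_val', cons_val_fin_one, star_def] at h00 h01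
  have h10 : U 1 0 = -(starRingEnd ℂ) (U 0 1) := by rw [← conj_conj (U 1 0), h01, map_neg]
  have hU_eq : U = cayleyKlein (U 0 0) (U 0 1) := by
    ext i j
    fin_cases i <;> fin_cases j <;> simp [cayleyKlein, ← h00, h10]
  refine ⟨U 0 0, U 0 1, ?_, hU_eq⟩
  rw [hU_eq, det_fin_two] at hdet
  simp only [cayleyKlein, of_apply, cons_val', cons_val_zero, cons_val_one, empty_val',
    cons_val_fin_one] at hdet
  have : (normSq (U 0 0) : ℂ) + normSq (U 0 1) = 1 := by
    rw [← mul_conj, ← mul_conj]; linear_combination hdet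
  exact_mod_cast this

lemma abs_re_sq_mul_sq_le (a b : ℂ) : |(a ^ 2 * b ^ 2).re| ≤ normSq a * normSq b := by
  calc |(a ^ 2 * b ^ 2).re| ≤ ‖a ^ 2 * b ^ 2‖ := abs_re_le_norm _
    _ = normSq a * normSq b := by
      rw [norm_mul, norm_pow, norm_pow, Complex.sq_norm, Complex.sq_norm]

lemma norm_sqrt_mul_sq {γ : ℝ} (hγ : 0 ≤ γ) (z : ℂ) :
    ‖(Real.sqrt γ : ℂ) * z‖ ^ 2 = γ * normSq z := by
  rw [norm_mul, mul_pow, Complex.sq_norm, Complex.sq_norm, normSq_ofReal,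
    Real.mul_self_sqrt hγ]

noncomputable def pauliLindbladTerms (γ₁ γ₂ γ₃ : ℝ) : Fin 3 → Matrix (Fin 2) (Fin 2) ℂ :=
  ![(Real.sqrt γ₁ : ℂ) • !![0, 1; 1, 0], (Real.sqrt γ₂ : ℂ) • !![0, -I; I, 0],
    (Real.sqrt γ₃ : ℂ) • !![1, 0; 0, -1]]

section Pauli

variable {γ₁ γ₂ γ₃ : ℝ}

lemma Jf_cayleyKlein (h1 : 0 ≤ γ₁) (h2 : 0 ≤ γ₂) (h3 : 0 ≤ γ₃) (a b : ℂ) :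
    Jf (pauliLindbladTerms γ₁ γ₂ γ₃) (cayleyKlein a b) 0 1 =
      γ₁ * (normSq a ^ 2 + normSq b ^ 2 - 2 * (a ^ 2 * b ^ 2).re)
      + γ₂ * (normSq a ^ 2 + normSq b ^ 2 + 2 * (a ^ 2 * b ^ 2).re)
      + γ₃ * (4 * normSq a * normSq b) := by
  have e0 : ((cayleyKlein a b)ᴴ * pauliLindbladTerms γ₁ γ₂ γ₃ 0 * cayleyKlein a b) 0 1
      = (Real.sqrt γ₁ : ℂ) * ((starRingEnd ℂ) a ^ 2 - b ^ 2) := by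
    simp [cayleyKlein, pauliLindbladTerms, mul_apply, Fin.sum_univ_two]; ring
  have e1 : ((cayleyKlein a b)ᴴ * pauliLindbladTerms γ₁ γ₂ γ₃ 1 * cayleyKlein a b) 0 1
      = (Real.sqrt γ₂ : ℂ) * (-I * ((starRingEnd ℂ) a ^ 2 + b ^ 2)) := by
    simp [cayleyKlein, pauliLindbladTerms, mul_apply, Fin.sum_univ_two]; ring
  have e2 : ((cayleyKlein a b)ᴴ * pauliLindbladTerms γ₁ γ₂ γ₃ 2 * cayleyKlein a b) 0 1
      = (Real.sqrt γ₃ : ℂ) * (2 * (starRingEnd ℂ) a * b) := by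
    simp [cayleyKlein, pauliLindbladTerms, mul_apply, Fin.sum_univ_two]; ring
  have hre : ((starRingEnd ℂ) a ^ 2 * (starRingEnd ℂ) b ^ 2).re = (a ^ 2 * b ^ 2).re := by
    rw [← map_pow, ← map_pow, ← map_mul, conj_re]
  rw [Jf, Fin.sum_univ_three, e0, e1, e2, norm_sqrt_mul_sq h1, norm_sqrt_mul_sq h2,
    norm_sqrt_mul_sq h3]
  simp only [normSq_mul, normSq_sub, normSq_add, map_pow, normSq_conj, normSq_neg, normSq_I,
    hre]
  norm_num

lemma Jf_cayleyKlein_cos_sin (h1 : 0 ≤ γ₁) (h2 : 0 ≤ γ₂) (h3 : 0 ≤ γ₃) (θ : ℝ) :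
    Jf (pauliLindbladTerms γ₁ γ₂ γ₃) (cayleyKlein (Real.cos θ) (Real.sin θ)) 0 1 =
      γ₁ + γ₂ - (γ₁ - γ₃) * Real.sin (2 * θ) ^ 2 := by
  have hre : ((Real.cos θ : ℂ) ^ 2 * (Real.sin θ : ℂ) ^ 2).re =
      Real.cos θ ^ 2 * Real.sin θ ^ 2 := by
    norm_cast
  rw [Jf_cayleyKlein h1 h2 h3, normSq_ofReal, normSq_ofReal, hre, Real.sin_two_mul]
  linear_combination
    (γ₁ + γ₂) * (Real.cos θ ^ 2 + Real.sin θ ^ 2 + 1) * Real.cos_sq_add_sin_sq θ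

end Pauli

lemma pauli_quadratic_mem_Icc {γ₁ γ₂ γ₃ s t x : ℝ} (h12 : γ₂ ≤ γ₁) (h23 : γ₃ ≤ γ₂)
    (hst : s + t = 1) (hs : 0 ≤ s) (ht : 0 ≤ t) (hx : |x| ≤ s * t) :
    γ₁ * (s ^ 2 + t ^ 2 - 2 * x) + γ₂ * (s ^ 2 + t ^ 2 + 2 * x) + γ₃ * (4 * s * t) ∈
      Set.Icc (γ₂ + γ₃) (γ₁ + γ₂) := by
  obtain ⟨hx₁, hx₂⟩ := abs_le.mp hx
  obtain rfl : t = 1 - s := by linarith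
  constructor
  · nlinarith [mul_nonneg (sub_nonneg.2 h12) (sub_nonneg.2 hx₂),
      mul_nonneg (sub_nonneg.2 (h23.trans h12)) (sq_nonneg (1 - 2 * s))]
  · nlinarith [mul_nonneg (sub_nonneg.2 h12) (neg_le_iff_add_nonneg.1 hx₁),
      mul_nonneg (sub_nonneg.2 h23) (mul_nonneg hs ht)]

theorem stmt_16 (γ₁ γ₂ γ₃ : ℝ) (h12 : γ₂ ≤ γ₁) (h23 : γ₃ ≤ γ₂) (h3 : 0 ≤ γ₃)
    (V : Fin 3 → Matrix (Fin 2) (Fin 2) ℂ)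
    (hV0 : V 0 = (Real.sqrt γ₁ : ℂ) • (!![0, 1; 1, 0] : Matrix (Fin 2) (Fin 2) ℂ))
    (hV1 : V 1 = (Real.sqrt γ₂ : ℂ) • (!![0, -Complex.I; Complex.I, 0] : Matrix (Fin 2) (Fin 2) ℂ))
    (hV2 : V 2 = (Real.sqrt γ₃ : ℂ) • (!![1, 0; 0, -1] : Matrix (Fin 2) (Fin 2) ℂ)) :
    {y : ℝ | ∃ U ∈ Matrix.specialUnitaryGroup (Fin 2) ℂ, y = Jf V U 0 1} =
      Set.Icc (γ₂ + γ₃) (γ₁ + γ₂) := by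
  have h2 : 0 ≤ γ₂ := h3.trans h23
  have h1 : 0 ≤ γ₁ := h2.trans h12
  obtain rfl : V = pauliLindbladTerms γ₁ γ₂ γ₃ := by
    ext k : 1
    fin_cases k <;> simp [hV0, hV1, hV2, pauliLindbladTerms]
  ext y
  constructor
  · rintro ⟨U, hU, rfl⟩
    obtain ⟨a, b, hab, rfl⟩ := mem_specialUnitaryGroup_fin_two_iff.mp hU
    rw [Jf_cayleyKlein h1 h2 h3]
    exact pauli_quadratic_mem_Icc h12 h23 hab (normSq_nonneg a) (normSq_nonneg b)
      (abs_re_sq_mul_sq_le a b)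
  · intro hy
    have hIVT := intermediate_value_Icc' (by positivity : (0 : ℝ) ≤ Real.pi / 4)
      (f := fun θ => γ₁ + γ₂ - (γ₁ - γ₃) * Real.sin (2 * θ) ^ 2) (by fun_prop)
    have hπ : 2 * (Real.pi / 4) = Real.pi / 2 := by ring
    obtain ⟨θ, -, hθ⟩ : y ∈ _ '' _ :=
      hIVT ⟨by simp [hπ]; linarith [hy.1], by simp; linarith [hy.2]⟩
    refine ⟨cayleyKlein (Real.cos θ) (Real.sin θ), cayleyKlein_mem_specialUnitaryGroup ?_, ?_⟩
    · rw [normSq_ofReal, normSq_ofReal, ← sq, ← sq, Real.cos_sq_add_sin_sq]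
    rw [Jf_cayleyKlein_cos_sin h1 h2 h3, ← hθ]
end

section
/- Assume Σ > 0 and set λ* = 1/2 + Δ/(2Σ). Then λ* is the unique root of μ in [0,1] (so λ* is the purest stabilizable state), and the diagonal density matrix ρ = diag(λ*, 1 − λ*) is a fixed point of the dissipative dynamics: ∑_{k=1}^3 (V_k ρ V_k* − (1/2)(V_k* V_k ρ + ρ V_k* V_k)) = 0. -/
open Matrix Complex

/-! With `t = |U₀₀|²`, unitarity of `U` gives
`J₁₂(U) = γ₊ t² + γ₋ (1 - t)² + 4 γ_z t (1 - t)` and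
`J₂₁(U) = γ₊ (1 - t)² + γ₋ t² + 4 γ_z t (1 - t)`.
Hence `J₁₂ + J₂₁ > 0` and `γ₋ J₁₂ ≤ γ₊ J₂₁`, i.e. `J₁₂ ≤ λ* (J₁₂ + J₂₁)` with `λ* = γ₊ / Σ`,
with equality at `U = 1`. So `max_U (J₁₂ - λ (J₁₂ + J₂₁))` is positive for `λ < λ*` (look at
`U = 1`), negative for `λ > λ*`, and zero at `λ*`. The fixed-point identity is detailed balance
`γ₊ (1 - λ*) = γ₋ λ*`: on diagonal states `σ₊` and `σ₋` transfer population between the two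
levels at these rates, and `σ_z` acts trivially. -/

theorem isGreatest_sub_mul_zero_iff {ι : Type*} {s : Set ι} {a b : ι → ℝ} {c : ℝ}
    (hb : ∀ i ∈ s, 0 < b i) (hle : ∀ i ∈ s, a i ≤ c * b i) {i₀ : ι} (hi₀ : i₀ ∈ s)
    (heq : a i₀ = c * b i₀) (l : ℝ) :
    IsGreatest {y | ∃ i ∈ s, y = a i - l * b i} 0 ↔ l = c := by
  constructor
  · rintro ⟨⟨i, hi, hzero⟩, hub⟩
    have hc_le : c * b i₀ ≤ l * b i₀ := by linarith [hub ⟨i₀, hi₀, rfl⟩]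
    have hl_le : l * b i ≤ c * b i := by linarith [hle i hi]
    exact le_antisymm (le_of_mul_le_mul_right hl_le (hb i hi))
      (le_of_mul_le_mul_right hc_le (hb i₀ hi₀))
  · rintro rfl
    refine ⟨⟨i₀, hi₀, by rw [heq, sub_self]⟩, ?_⟩
    rintro y ⟨i, hi, rfl⟩
    linarith [hle i hi]

noncomputable def dissipator {n : Type*} [Fintype n] (L ρ : Matrix n n ℂ) : Matrix n n ℂ :=
  L * ρ * Lᴴ - (1/2 : ℂ) • (Lᴴ * L * ρ + ρ * (Lᴴ * L))

theorem dissipator_ofReal_smul {n : Type*} [Fintype n] (r : ℝ) (L ρ : Matrix n n ℂ) :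
    dissipator ((r : ℂ) • L) ρ = ((r ^ 2 : ℝ) : ℂ) • dissipator L ρ := by
  simp only [dissipator, conjTranspose_smul, Complex.star_def, Complex.conj_ofReal,
    Matrix.smul_mul, Matrix.mul_smul]
  push_cast
  module

open ComplexConjugate

local notation "σ₊" => (!![0, 1; 0, 0] : Matrix (Fin 2) (Fin 2) ℂ)
local notation "σ₋" => (!![0, 0; 1, 0] : Matrix (Fin 2) (Fin 2) ℂ)
local notation "σz" => (!![1, 0; 0, -1] : Matrix (Fin 2) (Fin 2) ℂ)

theorem half_smul_pauliX_add_I_smul_pauliY :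
    (1/2 : ℂ) • ((!![0, 1; 1, 0] : Matrix (Fin 2) (Fin 2) ℂ) + I • !![0, -I; I, 0]) = σ₊ := by
  ext i j; fin_cases i <;> fin_cases j <;> simp; ring

theorem half_smul_pauliX_sub_I_smul_pauliY :
    (1/2 : ℂ) • ((!![0, 1; 1, 0] : Matrix (Fin 2) (Fin 2) ℂ) - I • !![0, -I; I, 0]) = σ₋ := by
  ext i j; fin_cases i <;> fin_cases j <;> simp; ring

theorem norm_sq_conjTranspose_mul_ofReal_smul_mul_apply {n : Type*} [Fintype n]
    (U W : Matrix n n ℂ) (r : ℝ) (i j : n) :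
    ‖(Uᴴ * ((r : ℂ) • W) * U) i j‖ ^ 2 = r ^ 2 * ‖(Uᴴ * W * U) i j‖ ^ 2 := by
  rw [Matrix.mul_smul, Matrix.smul_mul, Matrix.smul_apply, smul_eq_mul, norm_mul, mul_pow,
    Complex.norm_real, Real.norm_eq_abs, sq_abs]

section Unitary

variable {U : Matrix (Fin 2) (Fin 2) ℂ}

theorem normSq_entries_of_mem_unitaryGroup (hU : U ∈ unitaryGroup (Fin 2) ℂ) :
    normSq (U 0 1) = 1 - normSq (U 0 0) ∧ normSq (U 1 0) = 1 - normSq (U 0 0) ∧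
      normSq (U 1 1) = normSq (U 0 0) := by
  have hcols := congrFun₂ (mem_unitaryGroup_iff'.mp hU)
  have hrows := congrFun₂ (mem_unitaryGroup_iff.mp hU)
  have col0 := hcols 0 0
  have col1 := hcols 1 1
  have row0 := hrows 0 0
  simp only [star_eq_conjTranspose, mul_apply, conjTranspose_apply, Fin.sum_univ_two,
    RCLike.star_def, ← normSq_eq_conj_mul_self, mul_conj, one_apply_eq] at col0 col1 row0
  norm_cast at col0 col1 row0
  refine ⟨by linarith, by linarith, by linarith⟩

theorem conj_mul_add_conj_mul_eq_zero_of_mem_unitaryGroup (hU : U ∈ unitaryGroup (Fin 2) ℂ) :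
    conj (U 0 0) * U 0 1 + conj (U 1 0) * U 1 1 = 0 := by
  simpa [mul_apply, Fin.sum_univ_two] using congrFun₂ (mem_unitaryGroup_iff'.mp hU) 0 1

theorem norm_sq_conj_sigmaPlus_apply (hU : U ∈ unitaryGroup (Fin 2) ℂ) :
    ‖(Uᴴ * σ₊ * U) 0 1‖ ^ 2 = normSq (U 0 0) ^ 2 ∧
      ‖(Uᴴ * σ₊ * U) 1 0‖ ^ 2 = (1 - normSq (U 0 0)) ^ 2 := by
  obtain ⟨h01, h10, h11⟩ := normSq_entries_of_mem_unitaryGroup hU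
  have e01 : (Uᴴ * σ₊ * U) 0 1 = conj (U 0 0) * U 1 1 := by simp [mul_apply, Fin.sum_univ_two]
  have e10 : (Uᴴ * σ₊ * U) 1 0 = conj (U 0 1) * U 1 0 := by simp [mul_apply, Fin.sum_univ_two]
  rw [e01, e10, Complex.sq_norm, Complex.sq_norm, normSq_mul, normSq_mul, normSq_conj,
    normSq_conj, h01, h10, h11]
  constructor <;> ring

theorem norm_sq_conj_sigmaMinus_apply (hU : U ∈ unitaryGroup (Fin 2) ℂ) :
    ‖(Uᴴ * σ₋ * U) 0 1‖ ^ 2 = (1 - normSq (U 0 0)) ^ 2 ∧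
      ‖(Uᴴ * σ₋ * U) 1 0‖ ^ 2 = normSq (U 0 0) ^ 2 := by
  obtain ⟨h01, h10, h11⟩ := normSq_entries_of_mem_unitaryGroup hU
  have e01 : (Uᴴ * σ₋ * U) 0 1 = conj (U 1 0) * U 0 1 := by simp [mul_apply, Fin.sum_univ_two]
  have e10 : (Uᴴ * σ₋ * U) 1 0 = conj (U 1 1) * U 0 0 := by simp [mul_apply, Fin.sum_univ_two]
  rw [e01, e10, Complex.sq_norm, Complex.sq_norm, normSq_mul, normSq_mul, normSq_conj,
    normSq_conj, h01, h10, h11]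
  constructor <;> ring

theorem norm_sq_conj_pauliZ_apply (hU : U ∈ unitaryGroup (Fin 2) ℂ) :
    ‖(Uᴴ * σz * U) 0 1‖ ^ 2 = 4 * (normSq (U 0 0) * (1 - normSq (U 0 0))) ∧
      ‖(Uᴴ * σz * U) 1 0‖ ^ 2 = 4 * (normSq (U 0 0) * (1 - normSq (U 0 0))) := by
  obtain ⟨h01, -, -⟩ := normSq_entries_of_mem_unitaryGroup hU
  have horth := conj_mul_add_conj_mul_eq_zero_of_mem_unitaryGroup hU
  have hentry : (Uᴴ * σz * U) 0 1 = 2 * (conj (U 0 0) * U 0 1) := by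
    simp [mul_apply, Fin.sum_univ_two]
    linear_combination -horth
  have hsymm : (Uᴴ * σz * U) 1 0 = conj ((Uᴴ * σz * U) 0 1) := by
    simp [mul_apply, Fin.sum_univ_two]; ring
  have hnorm : ‖(Uᴴ * σz * U) 0 1‖ ^ 2 = 4 * (normSq (U 0 0) * (1 - normSq (U 0 0))) := by
    rw [hentry, Complex.sq_norm, normSq_mul, normSq_mul, normSq_conj, h01]
    norm_num
  rw [hsymm, Complex.norm_conj]
  exact ⟨hnorm, hnorm⟩

end Unitary

theorem dissipator_sigmaPlus_diagonal (a b : ℂ) :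
    dissipator σ₊ (diagonal ![a, b]) = b • σz := by
  ext i j; fin_cases i <;> fin_cases j <;>
    simp [dissipator, mul_apply, Fin.sum_univ_two, -cons_mul, ← two_mul, ← mul_assoc]

theorem dissipator_sigmaMinus_diagonal (a b : ℂ) :
    dissipator σ₋ (diagonal ![a, b]) = (-a) • σz := by
  ext i j; fin_cases i <;> fin_cases j <;>
    simp [dissipator, mul_apply, Fin.sum_univ_two, -cons_mul, ← two_mul, ← mul_assoc]

theorem dissipator_pauliZ_diagonal (a b : ℂ) :
    dissipator σz (diagonal ![a, b]) = 0 := by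
  ext i j; fin_cases i <;> fin_cases j <;>
    simp [dissipator, mul_apply, Fin.sum_univ_two, -cons_mul, ← two_mul, ← mul_assoc]

theorem Jf_eq_of_mem_unitaryGroup {γp γm γz : ℝ} (hp : 0 ≤ γp) (hm : 0 ≤ γm) (hz : 0 ≤ γz)
    {V : Fin 3 → Matrix (Fin 2) (Fin 2) ℂ} (hV0 : V 0 = (√γp : ℂ) • σ₊)
    (hV1 : V 1 = (√γm : ℂ) • σ₋) (hV2 : V 2 = (√γz : ℂ) • σz)
    {U : Matrix (Fin 2) (Fin 2) ℂ} (hU : U ∈ unitaryGroup (Fin 2) ℂ) :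
    Jf V U 0 1 = γp * normSq (U 0 0) ^ 2 + γm * (1 - normSq (U 0 0)) ^ 2
        + 4 * γz * (normSq (U 0 0) * (1 - normSq (U 0 0))) ∧
      Jf V U 1 0 = γp * (1 - normSq (U 0 0)) ^ 2 + γm * normSq (U 0 0) ^ 2
        + 4 * γz * (normSq (U 0 0) * (1 - normSq (U 0 0))) := by
  obtain ⟨p01, p10⟩ := norm_sq_conj_sigmaPlus_apply hU
  obtain ⟨m01, m10⟩ := norm_sq_conj_sigmaMinus_apply hU
  obtain ⟨z01, z10⟩ := norm_sq_conj_pauliZ_apply hU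
  simp only [Jf, Fin.sum_univ_three, hV0, hV1, hV2, norm_sq_conjTranspose_mul_ofReal_smul_mul_apply,
    Real.sq_sqrt hp, Real.sq_sqrt hm, Real.sq_sqrt hz, p01, p10, m01, m10, z01, z10]
  constructor <;> ring

theorem Jf_bounds_of_mem_unitaryGroup {γp γm γz : ℝ} (hpm : γm ≤ γp) (hm : 0 ≤ γm)
    (hz : 0 ≤ γz) (hpos : 0 < γp + γm)
    {V : Fin 3 → Matrix (Fin 2) (Fin 2) ℂ} (hV0 : V 0 = (√γp : ℂ) • σ₊)
    (hV1 : V 1 = (√γm : ℂ) • σ₋) (hV2 : V 2 = (√γz : ℂ) • σz)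
    {U : Matrix (Fin 2) (Fin 2) ℂ} (hU : U ∈ unitaryGroup (Fin 2) ℂ) :
    0 < Jf V U 0 1 + Jf V U 1 0 ∧
      (γp + γm) * Jf V U 0 1 ≤ γp * (Jf V U 0 1 + Jf V U 1 0) := by
  obtain ⟨hJ01, hJ10⟩ := Jf_eq_of_mem_unitaryGroup (hm.trans hpm) hm hz hV0 hV1 hV2 hU
  have ht0 : 0 ≤ 1 - normSq (U 0 0) :=
    (normSq_entries_of_mem_unitaryGroup hU).1 ▸ normSq_nonneg _
  have ht1 := normSq_nonneg (U 0 0)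
  set t := normSq (U 0 0)
  rw [hJ01, hJ10]
  constructor
  · -- `t² + (1 - t)² ≥ 1/2`
    nlinarith [sq_nonneg (2 * t - 1), mul_nonneg (mul_nonneg hz ht1) ht0]
  · linear_combination mul_nonneg (sub_nonneg.2 hpm)
      (add_nonneg (mul_nonneg hpos.le (sq_nonneg (1 - t)))
        (mul_nonneg (mul_nonneg (mul_nonneg zero_le_four hz) ht1) ht0))

theorem isGreatest_Jf_sub_mul_zero_iff {γp γm γz : ℝ} (hpm : γm ≤ γp) (hm : 0 ≤ γm)
    (hz : 0 ≤ γz) (hpos : 0 < γp + γm)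
    {V : Fin 3 → Matrix (Fin 2) (Fin 2) ℂ} (hV0 : V 0 = (√γp : ℂ) • σ₊)
    (hV1 : V 1 = (√γm : ℂ) • σ₋) (hV2 : V 2 = (√γz : ℂ) • σz) (l : ℝ) :
    IsGreatest {y : ℝ | ∃ U ∈ specialUnitaryGroup (Fin 2) ℂ,
        y = Jf V U 0 1 - l * (Jf V U 0 1 + Jf V U 1 0)} 0 ↔ l = γp / (γp + γm) := by
  have hbounds {U} (hU : U ∈ specialUnitaryGroup (Fin 2) ℂ) :=
    Jf_bounds_of_mem_unitaryGroup hpm hm hz hpos hV0 hV1 hV2 hU.1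
  have hJ_one := Jf_eq_of_mem_unitaryGroup (hm.trans hpm) hm hz hV0 hV1 hV2
    (one_mem (unitaryGroup (Fin 2) ℂ))
  simp only [one_apply_eq, map_one, sub_self] at hJ_one
  refine isGreatest_sub_mul_zero_iff (fun U hU ↦ (hbounds hU).1) (fun U hU ↦ ?_)
    (one_mem _) ?_ l
  · rw [div_mul_eq_mul_div, le_div_iff₀ hpos]
    linarith [(hbounds hU).2]
  · simp only [hJ_one]
    field_simp
    ring

theorem sum_dissipator_diagonal_eq_zero {γp γm γz : ℝ} (hp : 0 ≤ γp) (hm : 0 ≤ γm)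
    {V : Fin 3 → Matrix (Fin 2) (Fin 2) ℂ} (hV0 : V 0 = (√γp : ℂ) • σ₊)
    (hV1 : V 1 = (√γm : ℂ) • σ₋) (hV2 : V 2 = (√γz : ℂ) • σz) {lam : ℝ}
    (hbalance : γp * (1 - lam) = γm * lam) :
    ∑ k, dissipator (V k) (diagonal ![(lam : ℂ), 1 - lam]) = 0 := by
  rw [Fin.sum_univ_three, hV0, hV1, hV2, dissipator_ofReal_smul, dissipator_ofReal_smul,
    dissipator_ofReal_smul, dissipator_sigmaPlus_diagonal, dissipator_sigmaMinus_diagonal,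
    dissipator_pauliZ_diagonal, Real.sq_sqrt hp, Real.sq_sqrt hm, smul_zero, add_zero, smul_smul,
    smul_smul, ← add_smul]
  convert zero_smul ℂ σz
  rw [mul_neg, ← sub_eq_add_neg, sub_eq_zero]
  exact_mod_cast hbalance

theorem stmt_19_general
    (γp γm γz : ℝ) (hpm : γm ≤ γp) (hm : 0 ≤ γm) (hz : 0 ≤ γz)
    (Δ Sig : ℝ) (hΔ : Δ = γp - γm) (hSig : Sig = γp + γm)
    (hSigpos : 0 < Sig)
    (V : Fin 3 → Matrix (Fin 2) (Fin 2) ℂ)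
    (hV0 : V 0 = (Real.sqrt γp : ℂ) • ((1/2 : ℂ) •
      ((!![0, 1; 1, 0] : Matrix (Fin 2) (Fin 2) ℂ)
        + Complex.I • (!![0, -Complex.I; Complex.I, 0] : Matrix (Fin 2) (Fin 2) ℂ))))
    (hV1 : V 1 = (Real.sqrt γm : ℂ) • ((1/2 : ℂ) •
      ((!![0, 1; 1, 0] : Matrix (Fin 2) (Fin 2) ℂ)
        - Complex.I • (!![0, -Complex.I; Complex.I, 0] : Matrix (Fin 2) (Fin 2) ℂ))))
    (hV2 : V 2 = (Real.sqrt γz : ℂ) • (!![1, 0; 0, -1] : Matrix (Fin 2) (Fin 2) ℂ))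
    (μ : ℝ → ℝ)
    (hμ : ∀ lam ∈ Set.Icc (0:ℝ) 1,
      IsGreatest {y : ℝ | ∃ U ∈ Matrix.specialUnitaryGroup (Fin 2) ℂ,
        y = Jf V U 0 1 - lam * (Jf V U 0 1 + Jf V U 1 0)} (μ lam))
    (lamStar : ℝ) (hls : lamStar = 1/2 + Δ / (2 * Sig))
    (ρ : Matrix (Fin 2) (Fin 2) ℂ)
    (hρ : ρ = Matrix.diagonal ![(lamStar : ℂ), 1 - lamStar]) :
    lamStar ∈ Set.Icc (0:ℝ) 1 ∧ μ lamStar = 0 ∧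
    (∀ l ∈ Set.Icc (0:ℝ) 1, μ l = 0 → l = lamStar) ∧
    ∑ k, (V k * ρ * (V k)ᴴ -
      (1/2 : ℂ) • ((V k)ᴴ * V k * ρ + ρ * ((V k)ᴴ * V k))) = 0 := by
  subst hSig hΔ
  have hp : 0 ≤ γp := hm.trans hpm
  have hlam : lamStar = γp / (γp + γm) := by rw [hls]; field_simp; ring
  have hV0' : V 0 = (√γp : ℂ) • σ₊ := by rw [hV0, half_smul_pauliX_add_I_smul_pauliY]
  have hV1' : V 1 = (√γm : ℂ) • σ₋ := by rw [hV1, half_smul_pauliX_sub_I_smul_pauliY]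
  have hzero (l : ℝ) := isGreatest_Jf_sub_mul_zero_iff hpm hm hz hSigpos hV0' hV1' hV2 l
  have hmem : lamStar ∈ Set.Icc (0:ℝ) 1 := by
    rw [hlam]
    exact ⟨div_nonneg hp hSigpos.le, (div_le_one hSigpos).2 (by linarith)⟩
  refine ⟨hmem, (hμ _ hmem).unique ((hzero _).2 hlam),
    fun l hl hl0 ↦ hlam ▸ (hzero l).1 (hl0 ▸ hμ l hl), ?_⟩
  rw [hρ]
  exact sum_dissipator_diagonal_eq_zero hp hm hV0' hV1' hV2 (by rw [hlam]; field_simp; ring)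

theorem stmt_19
    (γp γm γz : ℝ) (hpm : γm ≤ γp) (hm : 0 ≤ γm) (hz : 0 ≤ γz)
    (Δ Sig δ : ℝ) (hΔ : Δ = γp - γm) (hSig : Sig = γp + γm) (hδ : δ = 2 * γz - Sig / 2)
    (hSigpos : 0 < Sig)
    (V : Fin 3 → Matrix (Fin 2) (Fin 2) ℂ)
    (hV0 : V 0 = (Real.sqrt γp : ℂ) • ((1/2 : ℂ) •
      ((!![0, 1; 1, 0] : Matrix (Fin 2) (Fin 2) ℂ)
        + Complex.I • (!![0, -Complex.I; Complex.I, 0] : Matrix (Fin 2) (Fin 2) ℂ))))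
    (hV1 : V 1 = (Real.sqrt γm : ℂ) • ((1/2 : ℂ) •
      ((!![0, 1; 1, 0] : Matrix (Fin 2) (Fin 2) ℂ)
        - Complex.I • (!![0, -Complex.I; Complex.I, 0] : Matrix (Fin 2) (Fin 2) ℂ))))
    (hV2 : V 2 = (Real.sqrt γz : ℂ) • (!![1, 0; 0, -1] : Matrix (Fin 2) (Fin 2) ℂ))
    (μ : ℝ → ℝ)
    (hμ : ∀ lam ∈ Set.Icc (0:ℝ) 1,
      IsGreatest {y : ℝ | ∃ U ∈ Matrix.specialUnitaryGroup (Fin 2) ℂ,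
        y = Jf V U 0 1 - lam * (Jf V U 0 1 + Jf V U 1 0)} (μ lam))
    (lamStar : ℝ) (hls : lamStar = 1/2 + Δ / (2 * Sig))
    (ρ : Matrix (Fin 2) (Fin 2) ℂ)
    (hρ : ρ = Matrix.diagonal ![(lamStar : ℂ), 1 - lamStar]) :
    lamStar ∈ Set.Icc (0:ℝ) 1 ∧ μ lamStar = 0 ∧
    (∀ l ∈ Set.Icc (0:ℝ) 1, μ l = 0 → l = lamStar) ∧
    ∑ k, (V k * ρ * (V k)ᴴ -
      (1/2 : ℂ) • ((V k)ᴴ * V k * ρ + ρ * ((V k)ᴴ * V k))) = 0 :=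
  stmt_19_general γp γm γz hpm hm hz Δ Sig hΔ hSig hSigpos V hV0 hV1 hV2 μ hμ lamStar hls ρ hρ
end
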